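/- arXiv:2411.03073 — 9 statements merged into one kernel-verified Lean document; each statement's English description precedes it below -/
import Mathlib

section
/- For all integers 1 ≤ a < b and every prime q, one has e_q(g_{a,b}) ≥ e_q(g_{a,b-1}) − min(e_q(X_{a,b-1}), e_q(b)) (with the convention e_q(0) = ∞). -/
open Finset

/-- `Lab r a b` is the least common multiple of those `i ∈ {a,…,b}` with `r i ≠ 0`
(equal to `1` if there are none). -/
def Lab (r : ℕ → ℤ) (a b : ℕ) : ℕ :=
  ((Finset.Icc a b).filter fun i => r i ≠ 0).lcm id

/-- `Xab r a b = L_{a,b} · Σ_{i=a}^b r_i / i`, as an integer. -/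
def Xab (r : ℕ → ℤ) (a b : ℕ) : ℤ :=
  ∑ i ∈ Finset.Icc a b, r i * ((Lab r a b / i : ℕ) : ℤ)

def gab (r : ℕ → ℤ) (a b : ℕ) : ℕ :=
  Int.gcd (Xab r a b) (Lab r a b)

def vab (r : ℕ → ℤ) (a b : ℕ) : ℕ :=
  Lab r a b / gab r a b

lemma Lab_ne_zero (r : ℕ → ℤ) (a b : ℕ) (ha : 1 ≤ a) : Lab r a b ≠ 0 := by
  unfold Lab
  intro h
  rw [Finset.lcm_eq_zero_iff] at h
  obtain ⟨i, hi, h0⟩ := h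
  simp only [Finset.mem_coe, Finset.mem_filter, Finset.mem_Icc, id] at hi h0
  omega

/-- For all integers `1 ≤ a < b` and every prime `q`,
`e_q(g_{a,b}) ≥ e_q(g_{a,b-1}) − min(e_q(X_{a,b-1}), e_q(b))`, where `e_q` is the `q`-adic
valuation with `e_q(0) = ∞` (here `emultiplicity`, valued in `ℕ∞`). -/
theorem gcd_valuation_lower_bound
    (t : ℕ) (r : ℕ → ℤ) (ht : 1 ≤ t)
    (hper : ∀ i, 1 ≤ i → r (i + t) = r i)
    (hnz : ∃ i, 1 ≤ i ∧ r i ≠ 0)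
    (a b : ℕ) (ha : 1 ≤ a) (hab : a < b)
    (q : ℕ) (hq : q.Prime) :
    emultiplicity (q : ℤ) (gab r a b : ℤ) ≥
      emultiplicity (q : ℤ) (gab r a (b - 1) : ℤ) -
        min (emultiplicity (q : ℤ) (Xab r a (b - 1))) (emultiplicity (q : ℤ) (b : ℤ)) := by
  have hb1 : b - 1 + 1 = b := by omega
  have hab1 : a ≤ b - 1 + 1 := by omega
  have hicc : Finset.Icc a b = insert b (Finset.Icc a (b - 1)) := by
    conv_lhs => rw [← hb1]
    rw [← Finset.insert_Icc_right_eq_Icc_add_one hab1, hb1]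
  have hbnot : b ∉ Finset.Icc a (b - 1) := by
    simp only [Finset.mem_Icc]; omega
  have hq' : Prime (q : ℤ) := Nat.prime_iff_prime_int.mp hq
  by_cases hrb : r b = 0
  · -- the new term vanishes, everything is unchanged
    have hL : Lab r a b = Lab r a (b - 1) := by
      unfold Lab
      rw [hicc, Finset.filter_insert]
      simp [hrb]
    have hX : Xab r a b = Xab r a (b - 1) := by
      unfold Xab
      rw [hicc, Finset.sum_insert hbnot, hL, hrb]
      simp
    have hg : gab r a b = gab r a (b - 1) := by
      unfold gab; rw [hL, hX]
    rw [hg]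
    exact tsub_le_self
  · -- main case : r b ≠ 0
    set L : ℕ := Lab r a (b - 1) with hLdef
    set L' : ℕ := Lab r a b with hL'def
    have hLdvd : L ∣ L' := by
      apply Finset.lcm_dvd
      intro i hi
      apply Finset.dvd_lcm
      rw [Finset.mem_filter] at hi ⊢
      refine ⟨?_, hi.2⟩
      rw [hicc]
      exact Finset.mem_insert_of_mem hi.1
    have hbdvd : b ∣ L' := by
      have hmem : b ∈ (Finset.Icc a b).filter fun i => r i ≠ 0 := by
        rw [Finset.mem_filter, Finset.mem_Icc]
        exact ⟨⟨by omega, le_rfl⟩, hrb⟩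
      exact Finset.dvd_lcm hmem
    have hL0 : L ≠ 0 := Lab_ne_zero r a (b - 1) ha
    have hL'0 : L' ≠ 0 := Lab_ne_zero r a b ha
    -- decomposition of X_{a,b}
    have hXX : Xab r a b =
        r b * ((L' / b : ℕ) : ℤ) + ((L' / L : ℕ) : ℤ) * Xab r a (b - 1) := by
      unfold Xab
      rw [hicc, Finset.sum_insert hbnot, Finset.mul_sum]
      congr 1
      apply Finset.sum_congr rfl
      intro i hi
      by_cases hri : r i = 0
      · simp [hri]
      · have hiL : i ∣ L := by
          apply Finset.dvd_lcm
          rw [Finset.mem_filter]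
          exact ⟨hi, hri⟩
        have hdiv : L' / i = (L' / L) * (L / i) := by
          rw [Nat.div_mul_div_comm hLdvd hiL, Nat.mul_comm L',
            Nat.mul_div_mul_left _ _ (Nat.pos_of_ne_zero hL0)]
        rw [hdiv]
        push_cast
        ring
    -- abbreviations for the valuations
    set e : ℤ → ℕ∞ := emultiplicity (q : ℤ) with he
    have hgX : e (gab r a (b - 1) : ℤ) ≤ e (Xab r a (b - 1)) :=
      emultiplicity_le_emultiplicity_of_dvd_right (Int.gcd_dvd_left _ _)
    have hgL : e (gab r a (b - 1) : ℤ) ≤ e (L : ℤ) :=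
      emultiplicity_le_emultiplicity_of_dvd_right (Int.gcd_dvd_right _ _)
    have hLL' : e (L : ℤ) ≤ e (L' : ℤ) :=
      emultiplicity_le_emultiplicity_of_dvd_right (Int.natCast_dvd_natCast.mpr hLdvd)
    have hsplit : e (L' : ℤ) = e ((L' / b : ℕ) : ℤ) + e (b : ℤ) := by
      conv_lhs => rw [← Nat.div_mul_cancel hbdvd]
      rw [he]
      push_cast
      exact emultiplicity_mul hq'
    have hL'bL' : e ((L' / b : ℕ) : ℤ) ≤ e (L' : ℤ) := by
      rw [hsplit]; exact le_self_add
    -- lower bound for e (Xab r a b)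
    have hX'low : min (e (Xab r a (b - 1))) (e ((L' / b : ℕ) : ℤ)) ≤ e (Xab r a b) := by
      rw [hXX, min_comm]
      refine le_trans ?_ min_le_emultiplicity_add
      apply min_le_min
      · exact emultiplicity_le_emultiplicity_of_dvd_right (dvd_mul_left _ _)
      · exact emultiplicity_le_emultiplicity_of_dvd_right (dvd_mul_left _ _)
    -- min of the two valuations bounds the valuation of the gcd
    have hminfin : min (e (Xab r a b)) (e (L' : ℤ)) ≠ ⊤ := by
      have : e (L' : ℤ) ≠ ⊤ := by
        rw [he, Ne, emultiplicity_eq_top, not_not, Int.finiteMultiplicity_iff]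
        constructor
        · simpa using hq.ne_one
        · exact_mod_cast hL'0
      exact fun h => this (top_le_iff.mp (h ▸ min_le_right _ _))
    have hgcd' : min (e (Xab r a b)) (e (L' : ℤ)) ≤ e (gab r a b : ℤ) := by
      obtain ⟨k, hk⟩ := WithTop.ne_top_iff_exists.mp hminfin
      rw [← hk]
      apply le_emultiplicity_of_pow_dvd
      apply Int.dvd_coe_gcd
      · exact pow_dvd_of_le_emultiplicity (hk.le.trans (min_le_left _ _))
      · exact pow_dvd_of_le_emultiplicity (hk.le.trans (min_le_right _ _))
    -- final chain of inequalities
    rw [ge_iff_le, tsub_le_iff_right]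
    refine le_trans ?_ (add_le_add_left hgcd' _)
    rcases le_total (e (Xab r a (b - 1))) (e (b : ℤ)) with h | h
    · rw [min_eq_left h]
      exact hgX.trans le_add_self
    · rw [min_eq_right h]
      rcases le_total (e (Xab r a (b - 1))) (e ((L' / b : ℕ) : ℤ)) with h2 | h2
      · have hXle : e (Xab r a (b - 1)) ≤ e (Xab r a b) := by
          rw [min_eq_left h2] at hX'low; exact hX'low
        rcases le_total (e (Xab r a (b - 1))) (e (L' : ℤ)) with h3 | h3
        · exact hgX.trans ((le_min hXle h3).trans le_self_add)
        · exact hgL.trans (hLL'.trans ((le_min (h3.trans hXle) le_rfl).trans le_self_add))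
      · have hL'ble : e ((L' / b : ℕ) : ℤ) ≤ e (Xab r a b) := by
          rw [min_eq_right h2] at hX'low; exact hX'low
        calc e (gab r a (b - 1) : ℤ) ≤ e (L : ℤ) := hgL
          _ ≤ e (L' : ℤ) := hLL'
          _ = e ((L' / b : ℕ) : ℤ) + e (b : ℤ) := hsplit
          _ ≤ min (e (Xab r a b)) (e (L' : ℤ)) + e (b : ℤ) :=
              add_le_add_left (le_min hL'ble hL'bL') _
end

section
/- For every integer a > 1 there exists an integer b with a < b ≤ 6(a−1) such that v_{a,b} < v_{a,b-1}. -/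
open Finset


open Finset

lemma den_dvd_of_mul_eq_int (q : ℚ) (n : ℕ) (hn : n ≠ 0) (z : ℤ)
    (h : q * (n : ℚ) = (z : ℚ)) : q.den ∣ n := by
  have hd : ((q.den : ℚ)) ≠ 0 := by exact_mod_cast q.den_nz
  have h2 : (q.num : ℚ) * (n : ℚ) = (z : ℚ) * (q.den : ℚ) := by
    rw [← Rat.mul_den_eq_num q]; rw [mul_comm q ((q.den:ℚ))]
    rw [mul_assoc, h]; ring
  have h3 : q.num * (n : ℤ) = z * (q.den : ℤ) := by exact_mod_cast h2
  have h4 : (q.den : ℤ) ∣ q.num * n := ⟨z, by linarith⟩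
  have h5 : q.den ∣ q.num.natAbs * n := by
    have := Int.natAbs_dvd_natAbs.mpr h4
    simpa [Int.natAbs_mul] using this
  exact (Nat.Coprime.symm q.reduced).dvd_of_dvd_mul_left h5

lemma den_add_dvd_lcm (x y : ℚ) : (x + y).den ∣ Nat.lcm x.den y.den := by
  set L := Nat.lcm x.den y.den with hL
  have hx : x.den ∣ L := Nat.dvd_lcm_left _ _
  have hy : y.den ∣ L := Nat.dvd_lcm_right _ _
  have hL0 : L ≠ 0 := Nat.lcm_ne_zero x.den_nz y.den_nz
  apply den_dvd_of_mul_eq_int _ _ hL0 (x.num * ((L / x.den : ℕ) : ℤ) + y.num * ((L / y.den : ℕ) : ℤ))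
  have hx' : (x.den : ℚ) * ((L / x.den : ℕ) : ℚ) = (L : ℚ) := by
    rw [← Nat.cast_mul, Nat.mul_div_cancel' hx]
  have hy' : (y.den : ℚ) * ((L / y.den : ℕ) : ℚ) = (L : ℚ) := by
    rw [← Nat.cast_mul, Nat.mul_div_cancel' hy]
  have hxx : x * (L : ℚ) = (x.num : ℚ) * ((L / x.den : ℕ) : ℚ) := by
    rw [← hx', ← mul_assoc, Rat.mul_den_eq_num]
  have hyy : y * (L : ℚ) = (y.num : ℚ) * ((L / y.den : ℕ) : ℚ) := by
    rw [← hy', ← mul_assoc, Rat.mul_den_eq_num]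
  rw [add_mul, hxx, hyy]
  simp only [Int.cast_add, Int.cast_mul, Int.cast_natCast]

lemma not_pow_dvd_lcm {p k m n : ℕ} (hp : p.Prime) (hm : m ≠ 0) (hn : n ≠ 0)
    (h1 : ¬ p ^ k ∣ m) (h2 : ¬ p ^ k ∣ n) : ¬ p ^ k ∣ Nat.lcm m n := by
  rw [hp.pow_dvd_iff_le_factorization hm] at h1
  rw [hp.pow_dvd_iff_le_factorization hn] at h2
  rw [hp.pow_dvd_iff_le_factorization (Nat.lcm_ne_zero hm hn),
    Nat.factorization_lcm hm hn]
  simp only [Finsupp.sup_apply, le_sup_iff]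
  tauto

lemma not_pow_dvd_den_sum {p k : ℕ} (hp : p.Prime) (hk : 0 < k) (s : Finset ℕ)
    (h : ∀ i ∈ s, ¬ p ^ k ∣ i) (h0 : ∀ i ∈ s, i ≠ 0) :
    ¬ p ^ k ∣ (∑ i ∈ s, (1 : ℚ) / i).den := by
  induction s using Finset.induction with
  | empty =>
      simp only [Finset.sum_empty, Rat.den_zero]
      intro hd
      have := Nat.le_of_dvd one_pos hd
      have := Nat.one_lt_pow hk.ne' hp.one_lt
      omega
  | @insert i s hi ih =>
      rw [Finset.sum_insert hi]
      intro hd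
      have hi0 : i ≠ 0 := h0 i (Finset.mem_insert_self _ _)
      have hdi : ((1:ℚ)/i).den ∣ i := by
        apply den_dvd_of_mul_eq_int _ _ hi0 1
        have : (i : ℚ) ≠ 0 := Nat.cast_ne_zero.mpr hi0
        field_simp
        simp
      have h1 : ¬ p ^ k ∣ ((1:ℚ)/i).den := fun hh =>
        h i (Finset.mem_insert_self _ _) (hh.trans hdi)
      have h2 : ¬ p ^ k ∣ (∑ j ∈ s, (1:ℚ)/j).den :=
        ih (fun j hj => h j (Finset.mem_insert_of_mem hj))
           (fun j hj => h0 j (Finset.mem_insert_of_mem hj))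
      exact not_pow_dvd_lcm hp (Rat.den_nz _) (Rat.den_nz _) h1 h2
        (hd.trans (den_add_dvd_lcm _ _))

lemma rat_cross_mul (r : ℚ) (n : ℕ) (z : ℤ) (h : r * (n : ℚ) = (z : ℚ)) :
    r.num * (n : ℤ) = z * (r.den : ℤ) := by
  have h2 : (r.num : ℚ) * (n : ℚ) = (z : ℚ) * (r.den : ℚ) := by
    rw [← Rat.mul_den_eq_num r]; rw [mul_comm r ((r.den : ℚ))]
    rw [mul_assoc, h]; ring
  exact_mod_cast h2

lemma pow_dvd_den_add (p k : ℕ) (hp : p.Prime) (hk : 0 < k) (q : ℚ)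
    (hq : ¬ p ^ k ∣ q.den) : p ^ k ∣ (q + 1 / ((p ^ k : ℕ) : ℚ)).den := by
  set j := q.den.factorization p with hj
  set m := q.den / p ^ j with hm
  have hden0 : q.den ≠ 0 := q.den_nz
  have hpm : ¬ p ∣ m := Nat.not_dvd_ordCompl hp hden0
  have hjm : p ^ j * m = q.den := Nat.ordProj_mul_ordCompl_eq_self q.den p
  have hjk : j < k := by
    by_contra hh
    exact hq ((pow_dvd_pow p (le_of_not_gt hh)).trans (Nat.ordProj_dvd _ _))
  set r := q + 1 / ((p ^ k : ℕ) : ℚ) with hr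
  have hp0 : (p : ℚ) ≠ 0 := Nat.cast_ne_zero.mpr hp.pos.ne'
  have hP0 : (((p ^ k : ℕ) : ℚ)) ≠ 0 := Nat.cast_ne_zero.mpr (pow_ne_zero k hp.pos.ne')
  have hd0 : ((q.den : ℚ)) ≠ 0 := Nat.cast_ne_zero.mpr hden0
  have key : r * (((p ^ k * q.den : ℕ)) : ℚ)
      = ((q.num * ((p ^ k : ℕ) : ℤ) + (q.den : ℤ) : ℤ) : ℚ) := by
    rw [hr]
    have h1 : q * ((q.den : ℚ) * ((p ^ k : ℕ) : ℚ)) = (q.num : ℚ) * ((p ^ k : ℕ) : ℚ) := by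
      rw [← mul_assoc, Rat.mul_den_eq_num]
    push_cast at h1 ⊢
    field_simp
    linear_combination h1
  have key2 : r.num * ((p ^ k * q.den : ℕ) : ℤ)
      = (q.num * ((p ^ k : ℕ) : ℤ) + (q.den : ℤ)) * r.den :=
    rat_cross_mul _ _ _ key
  set C : ℤ := q.num * (p : ℤ) ^ (k - j) + (m : ℤ) with hC
  have hkj : p ^ k = p ^ j * p ^ (k - j) := by
    rw [← pow_add]; congr 1; omega
  have hsplit : (q.num * ((p ^ k : ℕ) : ℤ) + (q.den : ℤ)) = (p : ℤ) ^ j * C := by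
    rw [hC, ← hjm, hkj]; push_cast; ring
  have hCp : ¬ (p : ℤ) ∣ C := by
    intro hdvd
    have h1 : (p : ℤ) ∣ q.num * (p : ℤ) ^ (k - j) :=
      Dvd.dvd.mul_left (dvd_pow_self (p : ℤ) (by omega : k - j ≠ 0)) _
    have h2 : (p : ℤ) ∣ (m : ℤ) := (Int.dvd_add_right h1).mp (hC ▸ hdvd)
    exact hpm (Int.ofNat_dvd.mp h2)
  have hpj0 : ((p : ℤ)) ^ j ≠ 0 := pow_ne_zero _ (by exact_mod_cast hp.pos.ne')
  have hcancel : r.num * (p : ℤ) ^ k * (m : ℤ) = C * r.den := by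
    apply mul_left_cancel₀ hpj0
    have lhs : (p : ℤ) ^ j * (r.num * (p : ℤ) ^ k * (m : ℤ))
        = r.num * ((p ^ k * q.den : ℕ) : ℤ) := by
      rw [← hjm]; push_cast; ring
    rw [lhs, key2, hsplit]; ring
  have hdd : (p : ℤ) ^ k ∣ C * r.den := ⟨r.num * (m : ℤ), by linarith [hcancel]⟩
  have := (Nat.prime_iff_prime_int.mp hp).pow_dvd_of_dvd_mul_left k hCp hdd
  exact_mod_cast this

/-- For every integer `a > 1` there exists `b` with `a < b ≤ 6(a−1)` such that the denominator
of `Σ_{i=a}^b 1/i` (in lowest terms) is smaller than that of `Σ_{i=a}^{b-1} 1/i`. -/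
theorem exists_denominator_drop_le_six_mul
    (a : ℕ) (ha : 1 < a) :
    ∃ b : ℕ, a < b ∧ b ≤ 6 * (a - 1) ∧
      (∑ i ∈ Finset.Icc a b, (1 : ℚ) / i).den <
        (∑ i ∈ Finset.Icc a (b - 1), (1 : ℚ) / i).den := by
  have h3 : (1 : ℕ) < 3 := by norm_num
  have hp3 : Nat.Prime 3 := by norm_num
  set k := Nat.clog 3 a with hkdef
  have hk : 0 < k := Nat.clog_pos h3 ha
  have haK : a ≤ 3 ^ k := Nat.le_pow_clog h3 a
  have haK' : 3 ^ (k - 1) < a := Nat.pow_pred_clog_lt_self h3 ha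
  have hKpos : 0 < 3 ^ k := pow_pos (by norm_num) k
  have hK3 : (3 : ℕ) ^ k = 3 ^ (k - 1) * 3 := by
    rw [← pow_succ]; congr 1; omega
  have hKpos' : 0 < 3 ^ (k - 1) := pow_pos (by norm_num) (k - 1)
  refine ⟨2 * 3 ^ k, by omega, by omega, ?_⟩
  have hb1 : 2 * 3 ^ k - 1 + 1 = 2 * 3 ^ k := by omega
  set S1 : ℚ := ∑ i ∈ Finset.Icc a (2 * 3 ^ k - 1), (1 : ℚ) / i with hS1
  set S2 : ℚ := ∑ i ∈ Finset.Icc a (2 * 3 ^ k), (1 : ℚ) / i with hS2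
  set T : ℚ := ∑ i ∈ (Finset.Icc a (2 * 3 ^ k - 1)).erase (3 ^ k), (1 : ℚ) / i with hT
  have hKmem : (3 : ℕ) ^ k ∈ Finset.Icc a (2 * 3 ^ k - 1) := by
    rw [Finset.mem_Icc]; omega
  have hsum1 : S1 = T + 1 / ((3 ^ k : ℕ) : ℚ) := by
    rw [hS1, ← Finset.add_sum_erase _ _ hKmem, ← hT, add_comm]
  have hins : Finset.Icc a (2 * 3 ^ k) = insert (2 * 3 ^ k) (Finset.Icc a (2 * 3 ^ k - 1)) := by
    ext x
    simp only [Finset.mem_Icc, Finset.mem_insert]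
    omega
  have hsum2 : S2 = S1 + 1 / ((2 * 3 ^ k : ℕ) : ℚ) := by
    rw [hS2, hins, Finset.sum_insert (by rw [Finset.mem_Icc]; omega), ← hS1, add_comm]
  -- the denominator of T is not divisible by 3 ^ k
  have hTden : ¬ 3 ^ k ∣ T.den := by
    rw [hT]
    apply not_pow_dvd_den_sum hp3 hk
    · intro i hi
      rw [Finset.mem_erase, Finset.mem_Icc] at hi
      rintro ⟨c, rfl⟩
      have h2c : ¬ 2 ≤ c := fun h2c => by
        have := Nat.mul_le_mul_left (3 ^ k) h2c
        omega
      interval_cases c <;> omega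
    · intro i hi
      rw [Finset.mem_erase, Finset.mem_Icc] at hi
      omega
  -- 3 ^ k divides the denominator of S1
  have hd1 : 3 ^ k ∣ S1.den := by
    rw [hsum1]
    exact pow_dvd_den_add 3 k hp3 hk T hTden
  -- 3 ^ k does not divide the denominator of S2
  have hpow : ((3 : ℚ)) ^ k = (3 : ℚ) ^ (k - 1) * 3 := by
    rw [← pow_succ]; congr 1; omega
  have hd2 : ¬ 3 ^ k ∣ S2.den := by
    have hy : (1 / ((3 ^ k : ℕ) : ℚ) + 1 / ((2 * 3 ^ k : ℕ) : ℚ))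
        * ((2 * 3 ^ (k - 1) : ℕ) : ℚ) = ((1 : ℤ) : ℚ) := by
      push_cast
      rw [hpow]
      have h30 : (3 : ℚ) ^ (k - 1) ≠ 0 := by positivity
      field_simp
      ring
    have hyden : (1 / ((3 ^ k : ℕ) : ℚ) + 1 / ((2 * 3 ^ k : ℕ) : ℚ)).den ∣ 2 * 3 ^ (k - 1) :=
      den_dvd_of_mul_eq_int _ _ (by positivity) 1 hy
    have hyd : ¬ 3 ^ k ∣ (1 / ((3 ^ k : ℕ) : ℚ) + 1 / ((2 * 3 ^ k : ℕ) : ℚ)).den := by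
      intro h
      have h' := Nat.le_of_dvd (by positivity) (h.trans hyden)
      omega
    have hS2' : S2 = T + (1 / ((3 ^ k : ℕ) : ℚ) + 1 / ((2 * 3 ^ k : ℕ) : ℚ)) := by
      rw [hsum2, hsum1]; ring
    intro h
    rw [hS2'] at h
    exact not_pow_dvd_lcm hp3 (Rat.den_nz _) (Rat.den_nz _) hTden hyd
      (h.trans (den_add_dvd_lcm _ _))
  -- S2.den divides 2 * S1.den
  obtain ⟨m1, hm1⟩ := hd1
  have hm10 : m1 ≠ 0 := by
    intro h
    rw [h, mul_zero] at hm1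
    exact S1.den_nz hm1
  have hdvd : S2.den ∣ 2 * S1.den := by
    apply den_dvd_of_mul_eq_int S2 _ (by positivity) (2 * S1.num + m1)
    have hm1' : ((S1.den : ℕ) : ℚ) = (3 : ℚ) ^ k * (m1 : ℚ) := by
      rw [hm1]; push_cast; ring
    have e1 : S1 * ((S1.den : ℕ) : ℚ) = (S1.num : ℚ) := Rat.mul_den_eq_num S1
    rw [hsum2]
    push_cast
    push_cast at e1 hm1'
    rw [add_mul]
    have h30 : ((3 : ℚ)) ^ k ≠ 0 := by positivity
    have hx : 1 / (2 * (3 : ℚ) ^ k) * (2 * (S1.den : ℚ)) = (m1 : ℚ) := by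
      rw [hm1']
      field_simp
    rw [mul_comm (2 : ℚ) ((S1.den : ℚ))] at hx ⊢
    calc S1 * ((S1.den : ℚ) * 2) + 1 / (2 * (3:ℚ)^k) * ((S1.den:ℚ) * 2)
        = 2 * (S1 * (S1.den : ℚ)) + 1 / (2 * (3:ℚ)^k) * ((S1.den:ℚ) * 2) := by ring
      _ = 2 * (S1.num : ℚ) + (m1 : ℚ) := by rw [e1, hx]
  -- conclude
  obtain ⟨c, hc⟩ := hdvd
  have hne1 : S2.den ≠ S1.den := fun h => hd2 (h ▸ ⟨m1, hm1⟩)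
  have hne2 : S2.den ≠ 2 * S1.den := fun h => hd2 (h ▸ ⟨2 * m1, by rw [hm1]; ring⟩)
  have hd10 : S1.den ≠ 0 := S1.den_nz
  have hc0 : c ≠ 0 := by intro h; rw [h, mul_zero] at hc; omega
  have hc1 : c ≠ 1 := by intro h; rw [h, mul_one] at hc; omega
  have h2c : S2.den * 2 ≤ S2.den * c := Nat.mul_le_mul_left _ (by omega)
  omega
end

section
/- For all integers 1 ≤ a ≤ b, the integer X_{a,b} = lcm(a, a+1, ..., b)·Σ_{i=a}^{b} 1/i is odd. -/
open Finset

lemma finset_lcm_ne_zero (s : Finset ℕ) (hs : ∀ i ∈ s, i ≠ 0) : s.lcm id ≠ 0 := by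
  induction s using Finset.induction with
  | empty => simp
  | @insert a s ha ih =>
    rw [Finset.lcm_insert]
    exact Nat.lcm_ne_zero (hs a (mem_insert_self a s))
      (ih fun i hi => hs i (mem_insert_of_mem hi))

lemma finset_lcm_factorization (s : Finset ℕ) (hs : ∀ i ∈ s, i ≠ 0) (p : ℕ) :
    (s.lcm id).factorization p = s.sup fun i => i.factorization p := by
  induction s using Finset.induction with
  | empty => simp
  | @insert a s ha ih =>
    rw [Finset.lcm_insert, Finset.sup_insert, id, lcm_eq_nat_lcm]
    rw [Nat.factorization_lcm (hs a (mem_insert_self a s))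
      (finset_lcm_ne_zero s fun i hi => hs i (mem_insert_of_mem hi))]
    simp [Finsupp.sup_apply, ih fun i hi => hs i (mem_insert_of_mem hi)]

/-- For all integers `1 ≤ a ≤ b`, the integer `X_{a,b} = lcm(a,…,b) · Σ_{i=a}^b 1/i` is odd. -/
theorem Xab_odd (a b : ℕ) (ha : 1 ≤ a) (hab : a ≤ b) :
    Odd (∑ i ∈ Finset.Icc a b, (Finset.Icc a b).lcm id / i) := by
  set s : Finset ℕ := Finset.Icc a b with hs
  have hmem_ne : ∀ i ∈ s, i ≠ 0 := by
    intro i hi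
    have := (Finset.mem_Icc.mp hi).1
    omega
  have hL0 : s.lcm id ≠ 0 := finset_lcm_ne_zero s hmem_ne
  set k : ℕ := s.sup fun i => i.factorization 2 with hk
  have hLk : (s.lcm id).factorization 2 = k := finset_lcm_factorization s hmem_ne 2
  have hne : s.Nonempty := ⟨a, Finset.mem_Icc.mpr ⟨le_rfl, hab⟩⟩
  obtain ⟨i0, hi0s, hi0⟩ := Finset.exists_mem_eq_sup s hne fun i => i.factorization 2
  -- uniqueness of the element with maximal 2-adic valuation
  have huniq : ∀ i ∈ s, i.factorization 2 = k → i = i0 := by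
    intro i hi hik
    by_contra hne'
    -- wlog set up: two distinct elements with valuation k
    have key : ∀ x y, x ∈ s → y ∈ s → x.factorization 2 = k → y.factorization 2 = k →
        x < y → False := by
      intro x y hx hy hxk hyk hxy
      have hx0 : x ≠ 0 := hmem_ne x hx
      have hy0 : y ≠ 0 := hmem_ne y hy
      have hxo := Nat.ordProj_mul_ordCompl_eq_self x 2
      have hyo := Nat.ordProj_mul_ordCompl_eq_self y 2
      set u := x / 2 ^ x.factorization 2 with hu
      set v := y / 2 ^ y.factorization 2 with hv
      have hux : x = 2 ^ k * u := by
        rw [hxk] at hxo; exact hxo.symm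
      have hvy : y = 2 ^ k * v := by
        rw [hyk] at hyo; exact hyo.symm
      have huodd : ¬ 2 ∣ u := Nat.not_dvd_ordCompl Nat.prime_two hx0
      have hvodd : ¬ 2 ∣ v := Nat.not_dvd_ordCompl Nat.prime_two hy0
      have huv : u < v := by
        have h2k : 0 < 2 ^ k := pow_pos (by norm_num) k
        rw [hux, hvy] at hxy
        exact lt_of_mul_lt_mul_left hxy (le_of_lt h2k)
      -- w = 2^k * (u+1) lies strictly between, has valuation ≥ k+1
      set w := 2 ^ k * (u + 1) with hw
      have hws : w ∈ s := by
        rw [hs, Finset.mem_Icc]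
        have hxw : x < w := by rw [hux, hw]; nlinarith [pow_pos (show 0 < 2 by norm_num) k]
        have hwy : w ≤ y := by
          rw [hvy, hw]
          have : u + 1 ≤ v := huv
          exact Nat.mul_le_mul_left _ this
        have hax : a ≤ x := (Finset.mem_Icc.mp hx).1
        have hyb : y ≤ b := (Finset.mem_Icc.mp hy).2
        omega
      have hdvd : 2 ^ (k + 1) ∣ w := by
        have : 2 ∣ u + 1 := by omega
        obtain ⟨c, hc⟩ := this
        exact ⟨c, by rw [hw, hc]; ring⟩
      have hw0 : w ≠ 0 := hmem_ne w hws
      have hle : k + 1 ≤ w.factorization 2 :=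
        (Nat.Prime.pow_dvd_iff_le_factorization Nat.prime_two hw0).mp hdvd
      have hsup : w.factorization 2 ≤ k := Finset.le_sup (f := fun i => i.factorization 2) hws
      omega
    rcases lt_or_gt_of_ne hne' with h | h
    · exact key i i0 hi hi0s hik hi0.symm h
    · exact key i0 i hi0s hi hi0.symm hik h
  -- each term's parity
  have hterm : ∀ i ∈ s, (Odd (s.lcm id / i) ↔ i = i0) := by
    intro i hi
    have hi0' : i ≠ 0 := hmem_ne i hi
    have hidvd : i ∣ s.lcm id := Finset.dvd_lcm hi
    have hq0 : s.lcm id / i ≠ 0 := by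
      have hile := Nat.le_of_dvd (Nat.pos_of_ne_zero hL0) hidvd
      exact (Nat.div_pos hile (Nat.pos_of_ne_zero hi0')).ne'
    have hfac : (s.lcm id / i).factorization 2 = k - i.factorization 2 := by
      rw [Nat.factorization_div hidvd]
      simp [hLk]
    have hik : i.factorization 2 ≤ k := Finset.le_sup (f := fun i => i.factorization 2) hi
    constructor
    · intro hodd
      have h2 : ¬ 2 ∣ s.lcm id / i := by
        rw [Nat.two_dvd_ne_zero, Nat.odd_iff.mp hodd]
      have : (s.lcm id / i).factorization 2 = 0 := by
        by_contra hc
        exact h2 ((Nat.Prime.dvd_iff_one_le_factorization Nat.prime_two hq0).mpr (by omega))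
      exact huniq i hi (by omega)
    · intro hii0
      subst hii0
      rw [Nat.odd_iff, ← Nat.two_dvd_ne_zero]
      intro h2
      have h1 : 1 ≤ (s.lcm id / i).factorization 2 :=
        (Nat.Prime.dvd_iff_one_le_factorization Nat.prime_two hq0).mp h2
      rw [hfac, hi0.symm] at h1
      omega
  rw [Finset.odd_sum_iff_odd_card_odd]
  have : (s.filter fun x => Odd (s.lcm id / x)) = {i0} := by
    ext x
    simp only [Finset.mem_filter, Finset.mem_singleton]
    constructor
    · rintro ⟨hx, hox⟩; exact (hterm x hx).mp hox
    · rintro rfl; exact ⟨hi0s, (hterm _ hi0s).mpr rfl⟩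
  rw [this]
  simp
end

section
/- For every integer n ≥ t(t+2), one has L_n > 2^{n/t − 2}. -/
open Finset

/-- Finite difference step for alternating binomial sums. -/
private lemma diff_sum (K : ℕ) (f : ℕ → ℚ) :
    ∑ k ∈ range (K+2), (-1:ℚ)^k * ((K+1).choose k : ℚ) * f k
      = ∑ k ∈ range (K+1), (-1:ℚ)^k * (K.choose k : ℚ) * (f k - f (k+1)) := by
  have h0 : ∑ k ∈ range (K+2), (-1:ℚ)^k * ((K+1).choose k : ℚ) * f k
      = (∑ k ∈ range (K+1), (-1:ℚ)^(k+1) * ((K+1).choose (k+1) : ℚ) * f (k+1)) + f 0 := by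
    rw [Finset.sum_range_succ']
    simp
  have h1 : ∀ k ∈ range (K+1), (-1:ℚ)^(k+1) * ((K+1).choose (k+1) : ℚ) * f (k+1)
      = -((-1:ℚ)^k * (K.choose k : ℚ) * f (k+1))
        + (-1:ℚ)^(k+1) * (K.choose (k+1) : ℚ) * f (k+1) := by
    intro k _
    have hps : ((K+1).choose (k+1) : ℚ) = (K.choose k : ℚ) + (K.choose (k+1) : ℚ) := by
      exact_mod_cast Nat.choose_succ_succ K k
    rw [hps]; ring
  rw [h0, Finset.sum_congr rfl h1, Finset.sum_add_distrib]
  have h2 : ∑ k ∈ range (K+1), (-1:ℚ)^(k+1) * (K.choose (k+1) : ℚ) * f (k+1)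
      = (∑ k ∈ range (K+1), (-1:ℚ)^k * (K.choose k : ℚ) * f k) - f 0 := by
    have h3 : ∑ k ∈ range (K+2), (-1:ℚ)^k * (K.choose k : ℚ) * f k
        = (∑ k ∈ range (K+1), (-1:ℚ)^(k+1) * (K.choose (k+1) : ℚ) * f (k+1)) + f 0 := by
      rw [Finset.sum_range_succ']
      simp
    have h4 : ∑ k ∈ range (K+2), (-1:ℚ)^k * (K.choose k : ℚ) * f k
        = ∑ k ∈ range (K+1), (-1:ℚ)^k * (K.choose k : ℚ) * f k := by
      rw [Finset.sum_range_succ, Nat.choose_succ_self]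
      simp
    rw [h4] at h3
    linarith
  rw [h2]
  have h5 : ∑ k ∈ range (K+1), (-1:ℚ)^k * (K.choose k : ℚ) * (f k - f (k+1))
      = (∑ k ∈ range (K+1), (-1:ℚ)^k * (K.choose k : ℚ) * f k)
        - ∑ k ∈ range (K+1), (-1:ℚ)^k * (K.choose k : ℚ) * f (k+1) := by
    rw [← Finset.sum_sub_distrib]
    exact Finset.sum_congr rfl (fun k _ => by ring)
  rw [h5, Finset.sum_neg_distrib]
  ring

/-- The partial-fraction identity for arithmetic progressions. -/
private lemma key_identity (d : ℚ) (hd : 0 < d) :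
    ∀ (K : ℕ) (a : ℚ), 0 < a →
      ∑ k ∈ range (K+1), (-1:ℚ)^k * (K.choose k : ℚ) / (a + k*d)
        = (K.factorial : ℚ) * d^K / ∏ k ∈ range (K+1), (a + k*d) := by
  intro K
  induction K with
  | zero => intro a ha; simp
  | succ K ih =>
    intro a ha
    have hterm : ∀ (b : ℚ), 0 < b → ∀ k : ℕ, (0:ℚ) < b + k*d := by
      intro b hb k
      have : (0:ℚ) ≤ (k:ℚ)*d := by positivity
      linarith
    have hstep : ∑ k ∈ range (K+2), (-1:ℚ)^k * ((K+1).choose k : ℚ) / (a + k*d)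
        = ∑ k ∈ range (K+1), (-1:ℚ)^k * (K.choose k : ℚ)
            * ((fun k : ℕ => 1/(a + k*d)) k - (fun k : ℕ => 1/(a + k*d)) (k+1)) := by
      rw [← diff_sum K (fun k : ℕ => 1/(a + k*d))]
      exact Finset.sum_congr rfl (fun k _ => by ring)
    rw [hstep]
    have hsplit : ∑ k ∈ range (K+1), (-1:ℚ)^k * (K.choose k : ℚ)
            * ((fun k : ℕ => 1/(a + k*d)) k - (fun k : ℕ => 1/(a + k*d)) (k+1))
        = (∑ k ∈ range (K+1), (-1:ℚ)^k * (K.choose k : ℚ) / (a + k*d))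
          - ∑ k ∈ range (K+1), (-1:ℚ)^k * (K.choose k : ℚ) / ((a+d) + k*d) := by
      rw [← Finset.sum_sub_distrib]
      refine Finset.sum_congr rfl (fun k _ => ?_)
      have : a + (↑(k+1):ℚ)*d = (a+d) + k*d := by push_cast; ring
      simp only []
      rw [this]
      ring
    rw [hsplit, ih a ha, ih (a+d) (by linarith)]
    have hP1 : (0:ℚ) < ∏ k ∈ range (K+1), (a + k*d) :=
      Finset.prod_pos (fun k _ => hterm a ha k)
    have hP2 : (0:ℚ) < ∏ k ∈ range (K+1), ((a+d) + k*d) :=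
      Finset.prod_pos (fun k _ => hterm (a+d) (by linarith) k)
    have hP3 : ∏ k ∈ range (K+1+1), (a + k*d)
        = (∏ k ∈ range (K+1), ((a+d) + k*d)) * a := by
      rw [Finset.prod_range_succ']
      simp only [Nat.cast_zero, zero_mul, add_zero]
      congr 1
      refine Finset.prod_congr rfl (fun k _ => ?_)
      push_cast
      ring
    have hP4 : ∏ k ∈ range (K+1+1), (a + k*d)
        = (∏ k ∈ range (K+1), (a + k*d)) * (a + ((K:ℚ)+1)*d) := by
      rw [Finset.prod_range_succ]
      push_cast
      ring
    have hP3pos : (0:ℚ) < ∏ k ∈ range (K+1+1), (a + k*d) :=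
      Finset.prod_pos (fun k _ => hterm a ha k)
    have hrel : (∏ k ∈ range (K+1), ((a+d) + k*d)) * a
        = (∏ k ∈ range (K+1), (a + k*d)) * (a + ((K:ℚ)+1)*d) := by
      rw [← hP3, hP4]
    have hKf : ((K+1).factorial : ℚ) = ((K:ℚ)+1) * (K.factorial : ℚ) := by
      rw [Nat.factorial_succ]; push_cast; ring
    rw [hKf, div_sub_div _ _ hP1.ne' hP2.ne',
      div_eq_div_iff (mul_pos hP1 hP2).ne' hP3pos.ne', hP4]
    linear_combination ((K.factorial : ℚ) * d^K * (∏ k ∈ range (K+1), (a + k*d))) * hrel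

/-- Farhi-type lemma: the product of an AP divides `K! * N` whenever each term divides `N`. -/
private lemma prod_AP_dvd (a d K N : ℕ) (ha : 0 < a) (hd : 0 < d)
    (hco : Nat.Coprime a d) (hdvd : ∀ k ≤ K, a + k * d ∣ N) :
    (∏ k ∈ range (K+1), (a + k*d)) ∣ K.factorial * N := by
  rcases Nat.eq_zero_or_pos N with rfl | hN
  · simp
  have haQ : (0:ℚ) < (a:ℚ) := by exact_mod_cast ha
  have hdQ : (0:ℚ) < (d:ℚ) := by exact_mod_cast hd
  have hterm : ∀ k : ℕ, (0:ℚ) < (a:ℚ) + k*(d:ℚ) := by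
    intro k
    have : (0:ℚ) ≤ (k:ℚ)*d := by positivity
    linarith
  -- the integer Z
  set Z : ℤ := ∑ k ∈ range (K+1), (-1:ℤ)^k * (K.choose k : ℤ) * ((N / (a + k*d) : ℕ) : ℤ)
    with hZ
  have hcast : ∀ k ≤ K, ((((N / (a + k*d) : ℕ)) : ℤ) : ℚ) = (N:ℚ) / ((a:ℚ) + k*d) := by
    intro k hk
    have h1 : ((a + k*d : ℕ) : ℚ) = (a:ℚ) + k*d := by push_cast; ring
    rw [Int.cast_natCast, ← h1, Nat.cast_div (hdvd k hk) (by rw [h1]; exact (hterm k).ne')]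
  have hZQ : (Z:ℚ) * (∏ k ∈ range (K+1), ((a:ℚ) + k*d))
      = (K.factorial : ℚ) * (d:ℚ)^K * (N:ℚ) := by
    have h2 : (Z:ℚ) = (N:ℚ) * ∑ k ∈ range (K+1), (-1:ℚ)^k * (K.choose k : ℚ) / ((a:ℚ) + k*d) := by
      rw [hZ, Finset.mul_sum, Int.cast_sum]
      refine Finset.sum_congr rfl (fun k hk => ?_)
      rw [Int.cast_mul, Int.cast_mul, hcast k (by simpa [Nat.lt_succ_iff] using hk)]
      push_cast
      ring
    rw [h2, key_identity (d:ℚ) hdQ K (a:ℚ) haQ]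
    have hPpos : (0:ℚ) < ∏ k ∈ range (K+1), ((a:ℚ) + k*d) :=
      Finset.prod_pos (fun k _ => hterm k)
    field_simp
    ring
  -- transfer to ℤ
  have hPcast : ((∏ k ∈ range (K+1), (a + k*d) : ℕ) : ℚ)
      = ∏ k ∈ range (K+1), ((a:ℚ) + k*d) := by
    push_cast
    ring
  have hZint : Z * ((∏ k ∈ range (K+1), (a + k*d) : ℕ) : ℤ)
      = ((K.factorial * d^K * N : ℕ) : ℤ) := by
    have : ((Z * ((∏ k ∈ range (K+1), (a + k*d) : ℕ) : ℤ) : ℤ) : ℚ)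
        = (((K.factorial * d^K * N : ℕ) : ℤ) : ℚ) := by
      push_cast
      rw [hPcast] at *
      linarith [hZQ]
    exact_mod_cast this
  have hdvdZ : ((∏ k ∈ range (K+1), (a + k*d) : ℕ) : ℤ) ∣ ((K.factorial * d^K * N : ℕ) : ℤ) :=
    ⟨Z, by rw [← hZint]; ring⟩
  have hdvdN : (∏ k ∈ range (K+1), (a + k*d)) ∣ K.factorial * d^K * N :=
    Int.natCast_dvd_natCast.mp hdvdZ
  -- remove the d^K factor by coprimality
  have hcop : Nat.Coprime (∏ k ∈ range (K+1), (a + k*d)) (d^K) := by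
    apply Nat.Coprime.pow_right
    apply Nat.Coprime.prod_left
    intro k _
    exact (Nat.coprime_add_mul_right_left a d k).mpr hco
  have : (∏ k ∈ range (K+1), (a + k*d)) ∣ (K.factorial * N) * d^K := by
    have h3 : K.factorial * d^K * N = (K.factorial * N) * d^K := by ring
    rwa [h3] at hdvdN
  exact hcop.dvd_of_dvd_mul_right this

private lemma prod_consec_eq (b J : ℕ) :
    (∏ k ∈ range (J+1), (b+1+k)) * b.factorial = (b+1+J).factorial := by
  induction J with
  | zero => simp [Nat.factorial_succ]
  | succ J ih =>
    rw [Finset.prod_range_succ, show b+1+(J+1) = (b+1+J)+1 from rfl, Nat.factorial_succ]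
    calc (∏ k ∈ range (J+1), (b+1+k)) * (b+1+(J+1)) * b.factorial
        = (∏ k ∈ range (J+1), (b+1+k)) * b.factorial * (b+1+J+1) := by ring
      _ = (b+1+J+1) * (b+1+J).factorial := by rw [ih]; ring

private lemma pow_le_of_dvd_consec (m N : ℕ) (hm : 1 ≤ m) (hN : 0 < N)
    (h : ∀ j, 1 ≤ j → j ≤ m → j ∣ N) : 2^(m-1) ≤ N := by
  by_cases hm8 : m < 8
  · -- small cases
    have h2 : 2 ≤ m → 2 ∣ N := fun hh => h 2 (by omega) hh
    have h3 : 3 ≤ m → 3 ∣ N := fun hh => h 3 (by omega) hh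
    have h4 : 4 ≤ m → 4 ∣ N := fun hh => h 4 (by omega) hh
    have h5 : 5 ≤ m → 5 ∣ N := fun hh => h 5 (by omega) hh
    have h7 : 7 ≤ m → 7 ∣ N := fun hh => h 7 (by omega) hh
    interval_cases m
    · simpa using Nat.one_le_iff_ne_zero.mpr hN.ne'
    · simpa using Nat.le_of_dvd hN (h2 le_rfl)
    · have h6 : 6 ∣ N := Nat.Coprime.mul_dvd_of_dvd_of_dvd (by norm_num)
        (h2 (by omega)) (h3 (by omega))
      have := Nat.le_of_dvd hN h6
      omega
    · have h12 : 12 ∣ N := Nat.Coprime.mul_dvd_of_dvd_of_dvd (by norm_num)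
        (h4 (by omega)) (h3 (by omega))
      have := Nat.le_of_dvd hN h12
      omega
    · have h12 : 12 ∣ N := Nat.Coprime.mul_dvd_of_dvd_of_dvd (by norm_num)
        (h4 (by omega)) (h3 (by omega))
      have h60 : 60 ∣ N := Nat.Coprime.mul_dvd_of_dvd_of_dvd (by norm_num)
        h12 (h5 (by omega))
      have := Nat.le_of_dvd hN h60
      omega
    · have h12 : 12 ∣ N := Nat.Coprime.mul_dvd_of_dvd_of_dvd (by norm_num)
        (h4 (by omega)) (h3 (by omega))
      have h60 : 60 ∣ N := Nat.Coprime.mul_dvd_of_dvd_of_dvd (by norm_num)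
        h12 (h5 (by omega))
      have := Nat.le_of_dvd hN h60
      omega
    · have h12 : 12 ∣ N := Nat.Coprime.mul_dvd_of_dvd_of_dvd (by norm_num)
        (h4 (by omega)) (h3 (by omega))
      have h60 : 60 ∣ N := Nat.Coprime.mul_dvd_of_dvd_of_dvd (by norm_num)
        h12 (h5 (by omega))
      have h420 : 420 ∣ N := Nat.Coprime.mul_dvd_of_dvd_of_dvd (by norm_num)
        h60 (h7 (by omega))
      have := Nat.le_of_dvd hN h420
      omega
  · -- large case via the AP lemma with d = 1
    push_neg at hm8
    set J := m / 2 with hJ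
    obtain ⟨a, ha⟩ : ∃ a, a = m - J := ⟨_, rfl⟩
    have hJ4 : 4 ≤ J := by omega
    have haJ : J ≤ a := by omega
    have ham : a + J = m := by omega
    have ha1 : 1 ≤ a := by omega
    have hdvd : ∀ k ≤ J, a + k * 1 ∣ N := by
      intro k hk
      exact h (a + k*1) (by omega) (by omega)
    have hP := prod_AP_dvd a 1 J N (by omega) one_pos (Nat.coprime_one_right a) hdvd
    -- product formula
    obtain ⟨b, rfl⟩ : ∃ b, a = b + 1 := ⟨a - 1, by omega⟩
    have hprod : (∏ k ∈ range (J+1), (b+1+k*1)) = (b+1+J).choose J * J.factorial * (b+1) := by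
      have e1 : (∏ k ∈ range (J+1), (b+1+k*1)) * b.factorial = (b+1+J).factorial := by
        rw [show (∏ k ∈ range (J+1), (b+1+k*1)) = ∏ k ∈ range (J+1), (b+1+k) from
          Finset.prod_congr rfl (fun k _ => by ring)]
        exact prod_consec_eq b J
      have e2 : (b+1+J).choose J * J.factorial * (b+1).factorial = (b+1+J).factorial := by
        have := Nat.choose_mul_factorial_mul_factorial (show J ≤ b+1+J by omega)
        rwa [show b+1+J-J = b+1 by omega] at this
      have e3 : (b+1).factorial = (b+1) * b.factorial := Nat.factorial_succ b
      apply Nat.eq_of_mul_eq_mul_right (Nat.factorial_pos b)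
      rw [e1, ← e2, e3]
      ring
    rw [hprod] at hP
    have hle : (b+1+J).choose J * J.factorial * (b+1) ≤ J.factorial * N :=
      Nat.le_of_dvd (by positivity) hP
    have hle2 : (b+1) * (b+1+J).choose J ≤ N := by
      have h6 : J.factorial * ((b+1) * (b+1+J).choose J) ≤ J.factorial * N := by
        calc J.factorial * ((b+1) * (b+1+J).choose J)
            = (b+1+J).choose J * J.factorial * (b+1) := by ring
          _ ≤ J.factorial * N := hle
      exact Nat.le_of_mul_le_mul_left h6 (Nat.factorial_pos J)
    -- chain of inequalities
    have hc1 : J * Nat.centralBinom J ≤ (b+1) * (b+1+J).choose J := by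
      apply Nat.mul_le_mul haJ
      rw [Nat.centralBinom]
      exact Nat.choose_le_choose J (by omega)
    have hc2 : 4^J < J * Nat.centralBinom J := Nat.four_pow_lt_mul_centralBinom J hJ4
    have hc3 : 2^(m-1) ≤ 4^J := by
      rw [show (4:ℕ) = 2^2 from rfl, ← pow_mul]
      exact Nat.pow_le_pow_right (by norm_num) (by omega)
    omega

private lemma pow_mul_factorial_le (a d K : ℕ) (ha : 1 ≤ a) (hd : 2 ≤ d) :
    2^K * K.factorial ≤ ∏ k ∈ range (K+1), (a + k*d) := by
  induction K with
  | zero => simpa using ha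
  | succ K ih =>
    rw [Finset.prod_range_succ, Nat.factorial_succ]
    calc 2^(K+1) * ((K+1) * K.factorial) = (2^K * K.factorial) * (2*(K+1)) := by ring
      _ ≤ (∏ k ∈ range (K+1), (a+k*d)) * (a + (K+1)*d) :=
        Nat.mul_le_mul ih (by nlinarith)

/-- For every `n ≥ t(t+2)` one has `L_n > 2^(n/t − 2)`. -/
theorem Lab_gt_two_rpow
    (t : ℕ) (r : ℕ → ℤ) (ht : 1 ≤ t)
    (hper : ∀ i, 1 ≤ i → r (i + t) = r i)
    (hnz : ∃ i, 1 ≤ i ∧ r i ≠ 0)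
    (n : ℕ) (hn : t * (t + 2) ≤ n) :
    (2 : ℝ) ^ ((n : ℝ) / t - 2) < (Lab r 1 n : ℝ) := by
  obtain ⟨i₀, hi₀1, hi₀⟩ := hnz
  -- periodicity for all multiples of t
  have hper' : ∀ q i, 1 ≤ i → r (i + t*q) = r i := by
    intro q
    induction q with
    | zero => intro i _; simp
    | succ q ih =>
      intro i hi
      have e : i + t*(q+1) = (i + t*q) + t := by ring
      rw [e, hper _ (by omega), ih i hi]
  -- the basic nonzero index i₁ ∈ [1, t]
  set i₁ := (i₀ - 1) % t + 1 with hi₁def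
  have hmlt : (i₀ - 1) % t < t := Nat.mod_lt _ (by omega)
  have hi₁t : i₁ ≤ t := by omega
  have hi₁1 : 1 ≤ i₁ := by omega
  have hi₀eq : i₀ = i₁ + t * ((i₀-1)/t) := by
    have := Nat.div_add_mod (i₀ - 1) t
    omega
  have hri₁ : r i₁ ≠ 0 := by
    rw [← hper' ((i₀-1)/t) i₁ hi₁1, ← hi₀eq]
    exact hi₀
  have hrk : ∀ k, r (i₁ + t*k) ≠ 0 := fun k => by rw [hper' k i₁ hi₁1]; exact hri₁
  -- the number of terms
  have htn : t ≤ n := le_trans (Nat.le_mul_of_pos_right t (by omega)) hn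
  have hi₁n : i₁ ≤ n := le_trans hi₁t htn
  set K := (n - i₁)/t with hK
  have hx : t*K + (n - i₁) % t = n - i₁ := Nat.div_add_mod (n - i₁) t
  have hx2 : (n - i₁) % t < t := Nat.mod_lt _ (by omega)
  clear_value K
  have hKt : t*K ≤ n - i₁ := by omega
  have hlt : n < t*(K+2) := by
    have h2 : t*(K+2) = t*K + t + t := by ring
    omega
  -- Lab facts
  set L := Lab r 1 n with hLdef
  have hL : L = ((Finset.Icc 1 n).filter fun i => r i ≠ 0).lcm id := rfl
  have hLpos : 0 < L := by
    apply Nat.pos_of_ne_zero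
    intro h0
    rw [hL, Finset.lcm_eq_zero_iff] at h0
    simp only [Set.mem_image, Finset.mem_coe, Finset.mem_filter, Finset.mem_Icc, id] at h0
    obtain ⟨i, ⟨⟨hi1, _⟩, _⟩, hi0⟩ := h0
    omega
  have hmem : ∀ k, k ≤ K → (i₁ + t*k) ∣ L := by
    intro k hk
    rw [hL]
    apply Finset.dvd_lcm
    simp only [Finset.mem_filter, Finset.mem_Icc]
    have hkK : t*k ≤ t*K := Nat.mul_le_mul_left t hk
    exact ⟨⟨by omega, by omega⟩, hrk k⟩
  -- the gcd decomposition
  set g := Nat.gcd i₁ t with hgdef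
  have hg : 0 < g := Nat.gcd_pos_of_pos_right i₁ (by omega)
  set a := i₁ / g with hadef
  set d := t / g with hddef
  have hag : g * a = i₁ := Nat.mul_div_cancel' (Nat.gcd_dvd_left i₁ t)
  have hdg : g * d = t := Nat.mul_div_cancel' (Nat.gcd_dvd_right i₁ t)
  have ha : 0 < a := Nat.div_pos (Nat.le_of_dvd (by omega) (Nat.gcd_dvd_left i₁ t)) hg
  have hd : 0 < d := Nat.div_pos (Nat.le_of_dvd (by omega) (Nat.gcd_dvd_right i₁ t)) hg
  have hco : Nat.Coprime a d := Nat.coprime_div_gcd_div_gcd hg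
  -- main bound
  have hmain : 2^K ≤ L := by
    rcases Nat.lt_or_ge d 2 with hd1 | hd2
    · -- d = 1, hence i₁ = t and all of t, 2t, …, (K+1)t are relevant indices
      have hd1' : d = 1 := by omega
      have hgt : g = t := by
        rw [hd1'] at hdg
        omega
      have hta : t * a = i₁ := by rw [← hgt]; exact hag
      have hit : i₁ = t := by
        refine Nat.le_antisymm hi₁t ?_
        calc t = t*1 := (mul_one t).symm
          _ ≤ t*a := Nat.mul_le_mul_left t ha
          _ = i₁ := hta
      have hj : ∀ j, 1 ≤ j → j ≤ K + 1 → j ∣ L := by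
        intro j hj1 hj2
        obtain ⟨jj, rfl⟩ : ∃ jj, j = jj + 1 := ⟨j - 1, by omega⟩
        have he : i₁ + t*jj = t*(jj+1) := by rw [hit]; ring
        have := hmem jj (by omega)
        rw [he] at this
        exact dvd_trans (Dvd.intro_left t rfl) this
      have := pow_le_of_dvd_consec (K+1) L (by omega) hLpos hj
      simpa using this
    · -- d ≥ 2
      have hdvd : ∀ k ≤ K, a + k*d ∣ L := by
        intro k hk
        have he : g * (a + k*d) = i₁ + t*k := by
          calc g * (a + k*d) = g*a + (g*d)*k := by ring
            _ = i₁ + t*k := by rw [hag, hdg]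
        exact dvd_trans (Dvd.intro_left g rfl) (he ▸ hmem k hk)
      have hP := prod_AP_dvd a d K L ha hd hco hdvd
      have hlow := pow_mul_factorial_le a d K ha hd2
      have hle : 2^K * K.factorial ≤ K.factorial * L :=
        le_trans hlow (Nat.le_of_dvd (by positivity) hP)
      have hle2 : K.factorial * 2^K ≤ K.factorial * L := by
        calc K.factorial * 2^K = 2^K * K.factorial := by ring
          _ ≤ K.factorial * L := hle
      exact Nat.le_of_mul_le_mul_left hle2 (Nat.factorial_pos K)
  -- conclude over the reals
  have ht0 : (0:ℝ) < t := by exact_mod_cast (by omega : 0 < t)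
  have hltR : (n:ℝ) < (t:ℝ) * ((K:ℝ) + 2) := by exact_mod_cast hlt
  have hKreal : (n:ℝ)/t - 2 < (K:ℝ) := by
    have hdiv : (n:ℝ)/t < (K:ℝ) + 2 := (div_lt_iff₀ ht0).mpr (by linarith)
    linarith
  calc (2:ℝ) ^ ((n:ℝ)/t - 2) < (2:ℝ) ^ ((K:ℕ):ℝ) :=
        (Real.rpow_lt_rpow_left_iff one_lt_two).mpr hKreal
    _ = ((2^K : ℕ) : ℝ) := by rw [Real.rpow_natCast]; push_cast; ring
    _ ≤ (L : ℝ) := Nat.cast_le.mpr hmain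
end

section
/- For every finite set S of odd primes, ∏_{q ∈ S} (1 − 2/q) > 0.62 · ∏_{q ∈ S} (1 − 1/q)². -/
open Finset

private lemma aux_Icc : ∀ N : ℕ, 2 ≤ N →
    (5:ℝ)/8 * (1 + 1/(4*(N:ℝ))) ≤ ∏ m ∈ Finset.Icc 1 N, (1 - 1/(2*(m:ℝ))^2) := by
  intro N hN
  induction N, hN using Nat.le_induction with
  | base =>
      rw [show Finset.Icc 1 2 = {1, 2} by decide]
      norm_num
  | succ n hn ih =>
      rw [Finset.prod_Icc_succ_top (by omega)]
      have hx : (2:ℝ) ≤ (n:ℝ) := by exact_mod_cast hn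
      set x := (n:ℝ) with hxdef
      have hx0 : (0:ℝ) < x := by linarith
      have hx1 : (0:ℝ) < x + 1 := by linarith
      have hcast : ((n+1:ℕ):ℝ) = x + 1 := by push_cast; ring
      rw [hcast]
      have hfac : (0:ℝ) < 1 - 1/(2*(x+1))^2 := by
        have h1 : (1:ℝ) < (2*(x+1))^2 := by nlinarith
        have h2 : 1/(2*(x+1))^2 < 1 := by
          rw [div_lt_one (by positivity)]; exact h1
        linarith
      have key : (5:ℝ)/8*(1+1/(4*(x+1))) ≤ (5/8*(1+1/(4*x))) * (1 - 1/(2*(x+1))^2) := by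
        have hne1 : (4:ℝ)*x ≠ 0 := by positivity
        have hne2 : (4:ℝ)*(x+1) ≠ 0 := by positivity
        have hne3 : ((2:ℝ)*(x+1))^2 ≠ 0 := by positivity
        field_simp
        ring_nf
        nlinarith [hx, sq_nonneg x]
      calc (5:ℝ)/8*(1+1/(4*(x+1)))
          ≤ (5/8*(1+1/(4*x))) * (1 - 1/(2*(x+1))^2) := key
        _ ≤ (∏ m ∈ Finset.Icc 1 n, (1 - 1/(2*(m:ℝ))^2)) * (1 - 1/(2*(x+1))^2) := by
            exact mul_le_mul_of_nonneg_right ih (le_of_lt hfac)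

private lemma aux_fac_pos (m : ℕ) (hm : 1 ≤ m) :
    0 < 1 - 1/(2*(m:ℝ))^2 ∧ 1 - 1/(2*(m:ℝ))^2 ≤ 1 := by
  have h1 : (1:ℝ) ≤ (m:ℝ) := by exact_mod_cast hm
  have h2 : (1:ℝ) < (2*(m:ℝ))^2 := by nlinarith
  have h3 : (0:ℝ) < 1/(2*(m:ℝ))^2 := by positivity
  have h4 : 1/(2*(m:ℝ))^2 < 1 := by rw [div_lt_one (by positivity)]; exact h2
  constructor <;> linarith

private lemma aux_T (T : Finset ℕ) (hT : ∀ m ∈ T, 1 ≤ m) :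
    (0.62:ℝ) < ∏ m ∈ T, (1 - 1/(2*(m:ℝ))^2) := by
  rcases T.eq_empty_or_nonempty with rfl | hne
  · norm_num
  · set N := T.max' hne with hN
    have hN1 : 1 ≤ N := hT _ (T.max'_mem hne)
    have hsub : T ⊆ Finset.Icc 1 N := by
      intro m hm
      exact Finset.mem_Icc.mpr ⟨hT m hm, Finset.le_max' T m hm⟩
    have hTpos : 0 < ∏ m ∈ T, (1 - 1/(2*(m:ℝ))^2) :=
      Finset.prod_pos (fun m hm => (aux_fac_pos m (hT m hm)).1)
    have hle : ∏ m ∈ Finset.Icc 1 N, (1 - 1/(2*(m:ℝ))^2)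
        ≤ ∏ m ∈ T, (1 - 1/(2*(m:ℝ))^2) := by
      rw [← Finset.prod_sdiff hsub]
      have h1 : ∏ m ∈ Finset.Icc 1 N \ T, (1 - 1/(2*(m:ℝ))^2) ≤ 1 := by
        apply Finset.prod_le_one
        · intro m hm
          have hm1 : 1 ≤ m := (Finset.mem_Icc.mp (Finset.mem_sdiff.mp hm).1).1
          exact le_of_lt (aux_fac_pos m hm1).1
        · intro m hm
          have hm1 : 1 ≤ m := (Finset.mem_Icc.mp (Finset.mem_sdiff.mp hm).1).1
          exact (aux_fac_pos m hm1).2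
      nlinarith
    have hIcc : (0.62:ℝ) < ∏ m ∈ Finset.Icc 1 N, (1 - 1/(2*(m:ℝ))^2) := by
      rcases eq_or_lt_of_le hN1 with h | h
      · rw [← h]
        norm_num
      · have h2 : 2 ≤ N := h
        have := aux_Icc N h2
        have hNr : (0:ℝ) < (N:ℝ) := by
          have : 0 < N := by omega
          exact_mod_cast this
        have h5 : (0:ℝ) < 1/(4*(N:ℝ)) := by positivity
        have : (0.62:ℝ) < 5/8 * (1 + 1/(4*(N:ℝ))) := by nlinarith
        linarith
    linarith

/-- For every finite set `S` of odd primes,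
`∏_{q ∈ S} (1 − 2/q) > 0.62 · ∏_{q ∈ S} (1 − 1/q)²`. -/
theorem prod_one_sub_two_div_gt
    (S : Finset ℕ) (hS : ∀ q ∈ S, q.Prime ∧ Odd q) :
    0.62 * ∏ q ∈ S, (1 - 1 / (q : ℝ)) ^ 2 < ∏ q ∈ S, (1 - 2 / (q : ℝ)) := by
  have h3 : ∀ q ∈ S, (3:ℝ) ≤ (q:ℝ) := by
    intro q hq
    obtain ⟨hp, ho⟩ := hS q hq
    have h2 := hp.two_le
    obtain ⟨k, hk⟩ := ho
    have : 3 ≤ q := by omega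
    exact_mod_cast this
  have hid : ∀ q ∈ S, (1 - 2/(q:ℝ)) = (1 - 1/(q:ℝ))^2 * (1 - 1/((q:ℝ)-1)^2) := by
    intro q hq
    have h3q := h3 q hq
    have h1 : (q:ℝ) ≠ 0 := by linarith
    have h2 : (q:ℝ) - 1 ≠ 0 := by intro h; rw [sub_eq_zero] at h; rw [h] at h3q; linarith
    field_simp
    ring
  rw [Finset.prod_congr rfl hid, Finset.prod_mul_distrib]
  have hA : 0 < ∏ q ∈ S, (1 - 1/(q:ℝ))^2 := by
    apply Finset.prod_pos
    intro q hq
    have h3q := h3 q hq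
    have : 1/(q:ℝ) < 1 := by rw [div_lt_one (by linarith)]; linarith
    nlinarith
  have himg : ∏ q ∈ S, (1 - 1/((q:ℝ)-1)^2)
      = ∏ m ∈ S.image (fun q : ℕ => q / 2), (1 - 1/(2*(m:ℝ))^2) := by
    rw [Finset.prod_image]
    · apply Finset.prod_congr rfl
      intro q hq
      obtain ⟨k, hk⟩ := (hS q hq).2
      have hdiv : q / 2 = k := by omega
      have hcast : (q:ℝ) = 2*(k:ℝ)+1 := by exact_mod_cast congrArg (Nat.cast : ℕ → ℝ) hk
      rw [hdiv, hcast]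
      ring_nf
    · intro a ha b hb hab
      obtain ⟨k, hk⟩ := (hS a ha).2
      obtain ⟨l, hl⟩ := (hS b hb).2
      simp only at hab
      omega
  have hB : (0.62:ℝ) < ∏ q ∈ S, (1 - 1/((q:ℝ)-1)^2) := by
    rw [himg]
    apply aux_T
    intro m hm
    obtain ⟨q, hq, rfl⟩ := Finset.mem_image.mp hm
    have := h3 q hq
    have : 3 ≤ q := by exact_mod_cast this
    omega
  nlinarith
end

section
/- For every integer d ≥ 1 and every real x, f_d(d − x) = (−1)^d · f_d(x). In particular, f_d(x + d/2) is an odd function of x when d is odd and an even function of x when d is even. -/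
set_option maxRecDepth 4000

open Finset

/-- `fd d x = Σ_{i=0}^d ∏_{0 ≤ j ≤ d, j ≠ i} (x − j)`. -/
noncomputable def fd (d : ℕ) (x : ℝ) : ℝ :=
  ∑ i ∈ Finset.range (d + 1), ∏ j ∈ (Finset.range (d + 1)).erase i, (x - (j : ℝ))

lemma fd_key (d : ℕ) (x : ℝ) : fd d ((d : ℝ) - x) = (-1) ^ d * fd d x := by
  unfold fd
  rw [Finset.mul_sum]
  refine Finset.sum_nbij' (fun i => d - i) (fun i => d - i) ?_ ?_ ?_ ?_ ?_
  · intro a ha; simp only [mem_range] at *; omega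
  · intro a ha; simp only [mem_range] at *; omega
  · intro a ha; simp only [mem_range] at ha; omega
  · intro a ha; simp only [mem_range] at ha; omega
  · intro a ha
    simp only [mem_range] at ha
    have hcard : ((Finset.range (d + 1)).erase (d - a)).card = d := by
      rw [Finset.card_erase_of_mem (by simp only [mem_range]; omega)]
      simp
    have hneg : ∏ j ∈ (Finset.range (d + 1)).erase (d - a), -(x - (j : ℝ)) =
        (-1 : ℝ) ^ d * ∏ j ∈ (Finset.range (d + 1)).erase (d - a), (x - (j : ℝ)) := by
      have he : ∏ j ∈ (Finset.range (d + 1)).erase (d - a), -(x - (j : ℝ)) =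
          ∏ j ∈ (Finset.range (d + 1)).erase (d - a), (-1 : ℝ) * (x - (j : ℝ)) :=
        Finset.prod_congr rfl fun j _ => by ring
      rw [he, Finset.prod_mul_distrib, Finset.prod_const, hcard]
    rw [← hneg]
    refine Finset.prod_nbij' (fun j => d - j) (fun j => d - j) ?_ ?_ ?_ ?_ ?_
    · intro b hb; simp only [mem_erase, mem_range] at *; omega
    · intro b hb; simp only [mem_erase, mem_range] at *; omega
    · intro b hb; simp only [mem_erase, mem_range] at hb; omega
    · intro b hb; simp only [mem_erase, mem_range] at hb; omega
    · intro b hb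
      simp only [mem_erase, mem_range] at hb
      have : ((d - b : ℕ) : ℝ) = (d : ℝ) - b := by
        rw [Nat.cast_sub (by omega)]
      rw [this]
      ring

/-- For every `d ≥ 1` and real `x`, `f_d(d − x) = (−1)^d · f_d(x)`. In particular,
`f_d(x + d/2)` is an odd function of `x` when `d` is odd and an even function when `d` is
even. -/
theorem fd_reflection (d : ℕ) (hd : 1 ≤ d) :
    (∀ x : ℝ, fd d ((d : ℝ) - x) = (-1) ^ d * fd d x) ∧
      (Odd d → ∀ x : ℝ, fd d ((d : ℝ) / 2 + -x) = -fd d ((d : ℝ) / 2 + x)) ∧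
      (Even d → ∀ x : ℝ, fd d ((d : ℝ) / 2 + -x) = fd d ((d : ℝ) / 2 + x)) := by
  refine ⟨fun x => fd_key d x, fun hodd x => ?_, fun heven x => ?_⟩
  · have := fd_key d ((d : ℝ) / 2 + x)
    rw [hodd.neg_one_pow] at this
    have h2 : (d : ℝ) - ((d : ℝ) / 2 + x) = (d : ℝ) / 2 + -x := by ring
    rw [h2] at this
    linarith
  · have := fd_key d ((d : ℝ) / 2 + x)
    rw [heven.neg_one_pow] at this
    have h2 : (d : ℝ) - ((d : ℝ) / 2 + x) = (d : ℝ) / 2 + -x := by ring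
    rw [h2] at this
    linarith
end

section
/- Let d ≥ 1 be an integer and p a prime with p > d. If x is an integer with f_d(x) ≡ 0 (mod p), then x ≢ i (mod p) for every integer i with 0 ≤ i ≤ d. -/
open Finset

/-- `fdZ d x = Σ_{i=0}^d ∏_{0 ≤ j ≤ d, j ≠ i} (x − j)` over the integers. -/
def fdZ (d : ℕ) (x : ℤ) : ℤ :=
  ∑ i ∈ Finset.range (d + 1), ∏ j ∈ (Finset.range (d + 1)).erase i, (x - (j : ℤ))

/-- If `d ≥ 1`, `p > d` is prime and `f_d(x) ≡ 0 (mod p)`, then `x ≢ i (mod p)` for every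
integer `0 ≤ i ≤ d`. -/
theorem fdZ_root_not_congr_small
    (d : ℕ) (hd : 1 ≤ d) (p : ℕ) (hp : p.Prime) (hdp : d < p)
    (x : ℤ) (hx : (p : ℤ) ∣ fdZ d x) :
    ∀ i : ℤ, 0 ≤ i → i ≤ (d : ℤ) → ¬ x ≡ i [ZMOD (p : ℤ)] := by
  haveI : Fact p.Prime := ⟨hp⟩
  intro i hi0 hid hcong
  -- work in ZMod p
  have hx0 : ((fdZ d x : ℤ) : ZMod p) = 0 :=
    (ZMod.intCast_zmod_eq_zero_iff_dvd _ _).mpr hx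
  have hxi : ((x : ZMod p)) = ((i : ℤ) : ZMod p) :=
    (ZMod.intCast_eq_intCast_iff _ _ _).mpr hcong
  set n : ℕ := i.toNat with hn
  have hni : (n : ℤ) = i := Int.toNat_of_nonneg hi0
  have hnd : n < d + 1 := by omega
  have hmem : n ∈ Finset.range (d + 1) := Finset.mem_range.mpr hnd
  have hcast : ((fdZ d x : ℤ) : ZMod p)
      = ∑ k ∈ Finset.range (d + 1),
          ∏ j ∈ (Finset.range (d + 1)).erase k, ((x : ZMod p) - (j : ZMod p)) := by
    simp [fdZ]
  have hxn : (x : ZMod p) = (n : ZMod p) := by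
    rw [hxi, ← hni]; push_cast; ring
  have hsum : ∑ k ∈ Finset.range (d + 1),
      ∏ j ∈ (Finset.range (d + 1)).erase k, ((x : ZMod p) - (j : ZMod p))
      = ∏ j ∈ (Finset.range (d + 1)).erase n, ((x : ZMod p) - (j : ZMod p)) := by
    apply Finset.sum_eq_single_of_mem n hmem
    intro k hk hkn
    apply Finset.prod_eq_zero (Finset.mem_erase.mpr ⟨fun h => hkn h.symm, hmem⟩)
    rw [hxn, sub_self]
  have hne : ∏ j ∈ (Finset.range (d + 1)).erase n, ((x : ZMod p) - (j : ZMod p)) ≠ 0 := by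
    apply Finset.prod_ne_zero_iff.mpr
    intro j hj
    obtain ⟨hjn, hjr⟩ := Finset.mem_erase.mp hj
    have hjd : j < d + 1 := Finset.mem_range.mp hjr
    rw [hxn]
    have : ((n : ZMod p) - (j : ZMod p)) = (((n : ℤ) - (j : ℤ) : ℤ) : ZMod p) := by
      push_cast; ring
    rw [this]
    intro h0
    have hdvd : (p : ℤ) ∣ ((n : ℤ) - (j : ℤ)) :=
      (ZMod.intCast_zmod_eq_zero_iff_dvd _ _).mp h0
    have hne0 : ((n : ℤ) - (j : ℤ)) ≠ 0 := by
      intro h; apply hjn; omega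
    have habs : (p : ℤ) ≤ |(n : ℤ) - (j : ℤ)| :=
      Int.le_of_dvd (abs_pos.mpr hne0) ((dvd_abs _ _).mpr hdvd)
    have : |(n : ℤ) - (j : ℤ)| ≤ (d : ℤ) := by
      rw [abs_le]; omega
    omega
  rw [hcast, hsum] at hx0
  exact hne hx0
end

section
/- Let d be a positive integer and p a prime such that p − 1 divides d. Then for all integers 1 ≤ a ≤ n, p does not divide the integer X^{(d)}_{a,n} = L^{(d)}_{a,n} · Σ_{i=a}^{n} 1/i^d, where L^{(d)}_{a,n} = lcm{i^d : a ≤ i ≤ n}. In particular, X^{(d)}_{a,n} has no prime divisor q with q − 1 dividing d. -/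
open Finset

lemma factorization_finset_lcm_apply (p : ℕ) (s : Finset ℕ) (f : ℕ → ℕ)
    (hf : ∀ i ∈ s, f i ≠ 0) :
    ((s.lcm f).factorization) p = s.sup (fun i => (f i).factorization p) := by
  induction s using Finset.induction with
  | empty => simp
  | @insert a s ha ih =>
    have hfa : f a ≠ 0 := hf a (Finset.mem_insert_self a s)
    have hfs : ∀ i ∈ s, f i ≠ 0 := fun i hi => hf i (Finset.mem_insert_of_mem hi)
    have hlcm : s.lcm f ≠ 0 := by
      simp only [Ne, Finset.lcm_eq_zero_iff]
      rintro ⟨i, hi, h0⟩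
      exact hfs i hi h0
    rw [Finset.lcm_insert, Finset.sup_insert, ← ih hfs]
    have h1 : (GCDMonoid.lcm (f a) (s.lcm f)) = Nat.lcm (f a) (s.lcm f) := rfl
    rw [h1, Nat.factorization_lcm hfa hlcm, Finsupp.sup_apply]

/-- If `p` is prime and `p − 1` divides `d ≥ 1`, then for all `1 ≤ a ≤ n`, `p` does not
divide the integer `X^{(d)}_{a,n} = L^{(d)}_{a,n} · Σ_{i=a}^n 1/i^d`, where
`L^{(d)}_{a,n} = lcm{i^d : a ≤ i ≤ n}`. -/
theorem not_dvd_power_harmonic_block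
    (d : ℕ) (hd : 1 ≤ d) (p : ℕ) (hp : p.Prime) (hpd : (p - 1) ∣ d)
    (a n : ℕ) (ha : 1 ≤ a) (han : a ≤ n) :
    ¬ p ∣ ∑ i ∈ Finset.Icc a n, ((Finset.Icc a n).lcm fun j => j ^ d) / i ^ d := by
  intro hdvd
  haveI : Fact p.Prime := ⟨hp⟩
  set s := Finset.Icc a n with hs
  have hsne : s.Nonempty := ⟨a, by simp [hs, Finset.mem_Icc, han]⟩
  have hmem : ∀ i ∈ s, 1 ≤ i ∧ i ≤ n := by
    intro i hi; rw [hs, Finset.mem_Icc] at hi; omega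
  set v : ℕ → ℕ := fun i => i.factorization p with hv
  set m := s.sup v with hm
  have hle : ∀ i ∈ s, v i ≤ m := fun i hi => Finset.le_sup hi
  obtain ⟨i0, hi0s, hi0⟩ := s.exists_mem_eq_sup hsne v
  have hvi0 : v i0 = m := by rw [hm, hi0]
  set L := s.lcm (fun j => j ^ d) with hL
  have hfne : ∀ i ∈ s, i ^ d ≠ 0 := by
    intro i hi; exact pow_ne_zero _ (by have := hmem i hi; omega)
  have hLne : L ≠ 0 := by
    rw [hL]
    simp only [Ne, Finset.lcm_eq_zero_iff]
    rintro ⟨i, hi, h0⟩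
    exact hfne i hi h0
  -- valuation of L
  have hvL : L.factorization p = d * m := by
    rw [hL, factorization_finset_lcm_apply p s _ hfne]
    apply le_antisymm
    · apply Finset.sup_le
      intro i hi
      rw [Nat.factorization_pow]
      simp only [Finsupp.smul_apply, smul_eq_mul]
      exact Nat.mul_le_mul_left d (hle i hi)
    · calc d * m = d * v i0 := by rw [hvi0]
        _ = (i0 ^ d).factorization p := by
            rw [Nat.factorization_pow]; simp [hv]
        _ ≤ _ := Finset.le_sup (f := fun i => ((i:ℕ) ^ d).factorization p) hi0s
  set L' := L / p ^ (d * m) with hL'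
  have hLeq : p ^ (d * m) * L' = L := by
    rw [hL', ← hvL]; exact Nat.ordProj_mul_ordCompl_eq_self L p
  have hpL' : ¬ p ∣ L' := by
    rw [hL', ← hvL]; exact Nat.not_dvd_ordCompl hp hLne
  have hdvdL : ∀ i ∈ s, i ^ d ∣ L := fun i hi => Finset.dvd_lcm hi
  have hti : ∀ i ∈ s, (L / i ^ d) * i ^ d = L := fun i hi =>
    Nat.div_mul_cancel (hdvdL i hi)
  have htne : ∀ i ∈ s, L / i ^ d ≠ 0 := by
    intro i hi h0
    rw [← hti i hi, h0, zero_mul] at hLne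
    exact hLne rfl
  -- case v i < m : p divides the term
  have hcase1 : ∀ i ∈ s, v i ≠ m → p ∣ L / i ^ d := by
    intro i hi hne
    have hvi : v i < m := lt_of_le_of_ne (hle i hi) hne
    have hfm := Nat.factorization_mul (htne i hi) (hfne i hi)
    have hsum : (L / i ^ d).factorization p + (i ^ d).factorization p = d * m := by
      have h9 : ((L / i ^ d) * (i ^ d)).factorization p = d * m := by
        rw [hti i hi, hvL]
      rw [hfm, Finsupp.add_apply] at h9
      exact h9
    have hpowfac : (i ^ d).factorization p = d * v i := by
      rw [Nat.factorization_pow]; simp [hv]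
    have h1 : d * (v i + 1) ≤ d * m := Nat.mul_le_mul_left d (by omega)
    rw [Nat.mul_add, Nat.mul_one] at h1
    exact Nat.dvd_of_factorization_pos (by omega)
  -- case v i = m : term ≡ L' mod p
  have hcase2 : ∀ i ∈ s, v i = m → ((L / i ^ d : ℕ) : ZMod p) = (L' : ZMod p) := by
    intro i hi hvi
    have hine : i ≠ 0 := by have := hmem i hi; omega
    set u := i / p ^ m with hu
    have hiu : p ^ m * u = i := by
      rw [hu, ← hvi]; exact Nat.ordProj_mul_ordCompl_eq_self i p
    have hpu : ¬ p ∣ u := by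
      rw [hu, ← hvi]; exact Nat.not_dvd_ordCompl hp hine
    have key : (L / i ^ d) * u ^ d = L' := by
      have h2 : p ^ (d * m) * ((L / i ^ d) * u ^ d) = p ^ (d * m) * L' := by
        calc p ^ (d * m) * ((L / i ^ d) * u ^ d)
            = (L / i ^ d) * (p ^ m * u) ^ d := by
              rw [mul_pow, ← pow_mul]; ring
          _ = (L / i ^ d) * i ^ d := by rw [hiu]
          _ = L := hti i hi
          _ = p ^ (d * m) * L' := hLeq.symm
      exact Nat.eq_of_mul_eq_mul_left (pow_pos hp.pos _) h2
    obtain ⟨c, hc⟩ := hpd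
    have hu1 : ((u : ZMod p)) ^ d = 1 := by
      rw [hc, pow_mul, ZMod.pow_card_sub_one_eq_one, one_pow]
      simpa [Ne, ZMod.natCast_eq_zero_iff] using hpu
    calc ((L / i ^ d : ℕ) : ZMod p)
        = ((L / i ^ d : ℕ) : ZMod p) * ((u : ZMod p)) ^ d := by rw [hu1, mul_one]
      _ = (((L / i ^ d) * u ^ d : ℕ) : ZMod p) := by push_cast; ring
      _ = (L' : ZMod p) := by rw [key]
  -- the sum in ZMod p
  have hX0 : ((∑ i ∈ s, L / i ^ d : ℕ) : ZMod p) = 0 :=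
    (ZMod.natCast_eq_zero_iff _ p).mpr hdvd
  rw [Nat.cast_sum] at hX0
  rw [← Finset.sum_filter_add_sum_filter_not s (fun i => v i = m)] at hX0
  have h2nd : ∑ i ∈ s.filter (fun i => ¬ v i = m), ((L / i ^ d : ℕ) : ZMod p) = 0 := by
    apply Finset.sum_eq_zero
    intro i hi
    rw [Finset.mem_filter] at hi
    exact (ZMod.natCast_eq_zero_iff _ p).mpr (hcase1 i hi.1 hi.2)
  have h1st : ∑ i ∈ s.filter (fun i => v i = m), ((L / i ^ d : ℕ) : ZMod p)
      = ((s.filter (fun i => v i = m)).card : ZMod p) * (L' : ZMod p) := by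
    calc ∑ i ∈ s.filter (fun i => v i = m), ((L / i ^ d : ℕ) : ZMod p)
        = ∑ _i ∈ s.filter (fun i => v i = m), (L' : ZMod p) :=
          Finset.sum_congr rfl (fun i hi => by
            rw [Finset.mem_filter] at hi
            exact hcase2 i hi.1 hi.2)
      _ = (s.filter (fun i => v i = m)).card • (L' : ZMod p) := Finset.sum_const _
      _ = _ := nsmul_eq_mul _ _
  rw [h1st, h2nd, add_zero] at hX0
  have hL'ne : (L' : ZMod p) ≠ 0 := by
    rw [Ne, ZMod.natCast_eq_zero_iff]; exact hpL'
  have hcarddvd : p ∣ (s.filter (fun i => v i = m)).card := by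
    rcases mul_eq_zero.mp hX0 with h | h
    · exact (ZMod.natCast_eq_zero_iff _ p).mp h
    · exact absurd h hL'ne
  -- count the filter
  set q := p ^ m with hq
  have hqpos : 0 < q := pow_pos hp.pos m
  have hfilter_eq : s.filter (fun i => v i = m) = s.filter (fun i => q ∣ i) := by
    apply Finset.filter_congr
    intro i hi
    have hine : i ≠ 0 := by have := hmem i hi; omega
    simp only [hq]
    constructor
    · intro h; rw [← h]; exact Nat.ordProj_dvd i p
    · intro h
      have : m ≤ v i := (Nat.Prime.pow_dvd_iff_le_factorization hp hine).mp h
      exact le_antisymm (hle i hi) this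
  set k := (s.filter (fun i => v i = m)).card with hk
  have hk1 : 1 ≤ k := by
    rw [hk]
    exact Finset.card_pos.mpr ⟨i0, Finset.mem_filter.mpr ⟨hi0s, hvi0⟩⟩
  have hkp : p ≤ k := Nat.le_of_dvd (by omega) hcarddvd
  -- counting: n / q = (a-1)/q + k
  have hcount : n / q = (a - 1) / q + k := by
    have h1 : s = Finset.Ioc (a - 1) n := by
      ext i; simp only [hs, Finset.mem_Icc, Finset.mem_Ioc]; omega
    have hunion : Finset.Ioc 0 n = Finset.Ioc 0 (a - 1) ∪ Finset.Ioc (a - 1) n := by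
      rw [Finset.Ioc_union_Ioc_eq_Ioc (by omega) (by omega)]
    have hdisj : Disjoint (Finset.Ioc 0 (a - 1)) (Finset.Ioc (a - 1) n) := by
      rw [Finset.disjoint_left]
      intro x hx hx'
      simp only [Finset.mem_Ioc] at hx hx'
      omega
    have := Nat.Ioc_filter_dvd_card_eq_div n q
    rw [hunion, Finset.filter_union,
      Finset.card_union_of_disjoint (Finset.disjoint_filter_filter hdisj)] at this
    rw [Nat.Ioc_filter_dvd_card_eq_div] at this
    rw [hk, hfilter_eq, h1]
    omega
  -- find a multiple of p^(m+1) in [a, n]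
  set A := (a - 1) / q with hA
  set w := p * (A / p + 1) with hw
  have hdm1 := Nat.div_add_mod A p
  have hmod1 : A % p < p := Nat.mod_lt _ hp.pos
  have hwgt : A < w ∧ w ≤ A + p := by
    constructor <;> [skip; skip] <;>
    · have : w = p * (A / p) + p := by rw [hw]; ring
      omega
  have hdm2 : q * A + (a - 1) % q = a - 1 := by
    rw [hA]; exact Nat.div_add_mod _ _
  have hmod2 : (a - 1) % q < q := Nat.mod_lt _ hqpos
  have hqw_ge : a ≤ q * w := by
    have h3 : q * (A + 1) ≤ q * w := Nat.mul_le_mul_left q (by omega)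
    have h4 : q * (A + 1) = q * A + q := by ring
    omega
  have hqw_le : q * w ≤ n := by
    have h5 : w ≤ n / q := by omega
    have h6 : q * w ≤ q * (n / q) := Nat.mul_le_mul_left q h5
    have h7 : q * (n / q) ≤ n := Nat.mul_div_le n q
    omega
  have hqws : q * w ∈ s := by rw [hs, Finset.mem_Icc]; exact ⟨hqw_ge, hqw_le⟩
  have hdvdqw : p ^ (m + 1) ∣ q * w := ⟨A / p + 1, by rw [hq, hw, pow_succ]; ring⟩
  have hvqw : m + 1 ≤ v (q * w) := by
    have hne : q * w ≠ 0 := by omega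
    exact (Nat.Prime.pow_dvd_iff_le_factorization hp hne).mp hdvdqw
  have := hle (q * w) hqws
  omega
end

section
/- Let A be a set of integers containing at least one odd integer, and suppose that for every odd prime p there exist a₁, a₂ ∈ A with a₁ ≢ a₂ (mod p). Then there exists a sequence (r_i)_{i≥1} with r_i ∈ A for all i such that for every n ≥ 1 the denominator of Σ_{i=1}^{n} r_i/i, written in lowest terms, equals lcm(1, 2, ..., n). -/
open Finset

def Lf (n : ℕ) : ℕ := (Finset.Icc 1 n).lcm id

lemma lcm_ne_zero' {s : Finset ℕ} (h0 : 0 ∉ s) : s.lcm id ≠ 0 := by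
  intro h
  rw [Finset.lcm_eq_zero_iff] at h
  obtain ⟨i, hi, hi0⟩ := h
  simp only [id_eq] at hi0
  subst hi0
  exact h0 hi

lemma Lf_ne_zero (n : ℕ) : Lf n ≠ 0 :=
  lcm_ne_zero' (by simp)

lemma dvd_Lf {i n : ℕ} (h1 : 1 ≤ i) (h2 : i ≤ n) : i ∣ Lf n := by
  have := Finset.dvd_lcm (f := id) (Finset.mem_Icc.mpr ⟨h1, h2⟩)
  simpa [Lf] using this

lemma Lf_dvd_of_le {m n : ℕ} (h : m ≤ n) : Lf m ∣ Lf n := by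
  apply Finset.lcm_dvd
  intro i hi
  simp only [Finset.mem_Icc] at hi
  exact dvd_Lf hi.1 (le_trans hi.2 h)

lemma lcm_fact_le {p k : ℕ} (hp : p.Prime) (s : Finset ℕ) (h0 : 0 ∉ s)
    (hk : ∀ i ∈ s, i.factorization p ≤ k) : (s.lcm id).factorization p ≤ k := by
  classical
  induction s using Finset.induction_on with
  | empty => simp
  | @insert a s ha ih =>
    rw [Finset.lcm_insert, id_eq]
    have ha0 : a ≠ 0 := fun h => h0 (by simp [h])
    have hs0 : 0 ∉ s := fun h => h0 (Finset.mem_insert_of_mem h)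
    have hlcm : s.lcm id ≠ 0 := lcm_ne_zero' hs0
    have : (Nat.lcm a (s.lcm id)).factorization = a.factorization ⊔ (s.lcm id).factorization :=
      Nat.factorization_lcm ha0 hlcm
    rw [show (lcm a (s.lcm id)) = Nat.lcm a (s.lcm id) from rfl, this]
    simp only [Finsupp.sup_apply, sup_le_iff]
    exact ⟨hk a (Finset.mem_insert_self a s),
      ih hs0 (fun i hi => hk i (Finset.mem_insert_of_mem hi))⟩

lemma Lf_fact {p : ℕ} (hp : p.Prime) {n : ℕ} (hn : 1 ≤ n) :
    (Lf n).factorization p = Nat.log p n := by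
  apply le_antisymm
  · apply lcm_fact_le hp _ (by simp)
    intro i hi
    simp only [Finset.mem_Icc] at hi
    have hi0 : i ≠ 0 := by omega
    have h1 : p ^ i.factorization p ∣ i := Nat.ordProj_dvd i p
    have h2 : p ^ i.factorization p ≤ n :=
      le_trans (Nat.le_of_dvd (by omega) h1) hi.2
    exact (Nat.le_log_iff_pow_le hp.one_lt (by omega)).mpr h2
  · rw [← (Nat.Prime.pow_dvd_iff_le_factorization hp (Lf_ne_zero n))]
    rcases Nat.eq_zero_or_pos (Nat.log p n) with h | h
    · simp [h]
    · have hple : p ≤ n := by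
        have := Nat.pow_log_le_self p (show n ≠ 0 by omega)
        calc p = p ^ 1 := (pow_one p).symm
        _ ≤ p ^ Nat.log p n := Nat.pow_le_pow_right hp.pos h
        _ ≤ n := this
      exact dvd_Lf (Nat.one_le_iff_ne_zero.mpr (pow_ne_zero _ hp.ne_zero))
        (Nat.pow_log_le_self p (by omega))

lemma den_dvd_of_mul_int (q : ℚ) (M : ℕ) (hM : M ≠ 0) (z : ℤ) (h : q * (M:ℚ) = (z:ℚ)) :
    (q.den : ℕ) ∣ M := by
  have hq : q = (z : ℚ) / (M : ℚ) := by
    field_simp at h ⊢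
    linarith [h]
  have h2 : q = Rat.divInt z M := by rw [hq, Rat.divInt_eq_div]; norm_num
  have h3 := h2 ▸ Rat.den_dvd z (M : ℤ)
  exact_mod_cast h3

lemma mul_int_of_den_dvd (q : ℚ) (M : ℕ) (h : (q.den : ℕ) ∣ M) :
    ∃ z : ℤ, q * (M:ℚ) = (z:ℚ) := by
  obtain ⟨c, hc⟩ := h
  refine ⟨q.num * c, ?_⟩
  rw [hc]
  push_cast
  rw [← mul_assoc, Rat.mul_den_eq_num]

lemma padicValRat_ge_neg_den (p : ℕ) (q : ℚ) :
    -(padicValNat p q.den : ℤ) ≤ padicValRat p q := by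
  rw [padicValRat_def]
  have : (0:ℤ) ≤ padicValInt p q.num := Int.ofNat_nonneg _
  omega

lemma padicValRat_of_dvd_den {p : ℕ} (hp : p.Prime) {q : ℚ} (h : p ∣ q.den) :
    padicValRat p q = -(padicValNat p q.den : ℤ) := by
  rw [padicValRat_def]
  have hnum : ¬ (p:ℤ) ∣ q.num := by
    intro hd
    have h1 : p ∣ q.num.natAbs := Int.natCast_dvd_natCast.mp (Int.dvd_natAbs.mpr hd)
    have h2 : p ∣ Nat.gcd q.num.natAbs q.den := Nat.dvd_gcd h1 h
    rw [q.reduced] at h2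
    exact Nat.Prime.not_dvd_one hp h2
  rw [padicValInt.eq_zero_of_not_dvd hnum]
  simp

lemma den_fact_ge {p : ℕ} (hp : p.Prime) {q : ℚ} {k : ℕ}
    (h : padicValRat p q ≤ -(k : ℤ)) : k ≤ q.den.factorization p := by
  rw [Nat.factorization_def _ hp]
  rw [padicValRat_def] at h
  have : (0:ℤ) ≤ padicValInt p q.num := Int.ofNat_nonneg _
  omega
lemma log_ge_one {p n : ℕ} (hp : 1 < p) (hple : p ≤ n) : 1 ≤ Nat.log p n := by
  have : p ^ 1 ≤ n := by simpa using hple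
  exact (Nat.le_log_iff_pow_le hp (by omega)).mpr this

lemma unique_prob {p q n : ℕ} (hp : p.Prime) (hq : q.Prime) (hn : 1 ≤ n)
    (hpn : p ≤ n) (hqn : q ≤ n) (hpe : padicValNat p n = Nat.log p n)
    (hqe : padicValNat q n = Nat.log q n) : p = q := by
  by_contra hne
  set α := Nat.log p n with hα
  set β := Nat.log q n with hβ
  have hα1 : 1 ≤ α := log_ge_one hp.one_lt hpn
  have hβ1 : 1 ≤ β := log_ge_one hq.one_lt hqn
  have hpd : p ^ α ∣ n := hpe ▸ pow_padicValNat_dvd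
  have hqd : q ^ β ∣ n := hqe ▸ pow_padicValNat_dvd
  have hcop : Nat.Coprime (p ^ α) (q ^ β) :=
    ((Nat.coprime_primes hp hq).mpr hne).pow _ _
  have hmul : p ^ α * q ^ β ∣ n := hcop.mul_dvd_of_dvd_of_dvd hpd hqd
  have hle : p ^ α * q ^ β ≤ n := Nat.le_of_dvd (by omega) hmul
  have h1 : n < p ^ (α + 1) := Nat.lt_pow_succ_log_self hp.one_lt n
  have h2 : n < q ^ (β + 1) := Nat.lt_pow_succ_log_self hq.one_lt n
  rw [pow_succ] at h1 h2
  have hqβp : q ^ β < p := by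
    have := lt_of_le_of_lt hle h1
    exact lt_of_mul_lt_mul_left this (Nat.zero_le _)
  have hpαq : p ^ α < q := by
    have : q ^ β * p ^ α ≤ n := by rwa [mul_comm] at hle
    have := lt_of_le_of_lt this h2
    exact lt_of_mul_lt_mul_left this (Nat.zero_le _)
  have h3 : q ≤ q ^ β := Nat.le_self_pow (by omega) q
  have h4 : p ≤ p ^ α := Nat.le_self_pow (by omega) p
  omega

lemma two_prob {n : ℕ} (hn : 2 ≤ n) (h2 : padicValNat 2 n = Nat.log 2 n) :
    n = 2 ^ Nat.log 2 n := by
  set α := Nat.log 2 n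
  have hd : 2 ^ α ∣ n := h2 ▸ pow_padicValNat_dvd
  obtain ⟨m, hm⟩ := hd
  have h1 : n < 2 ^ (α + 1) := Nat.lt_pow_succ_log_self (by norm_num) n
  rw [pow_succ] at h1
  have hpos : 0 < 2 ^ α := Nat.pow_pos (by norm_num)
  have hm2 : m < 2 := by
    by_contra h
    push_neg at h
    have : 2 ^ α * 2 ≤ 2 ^ α * m := Nat.mul_le_mul_left _ h
    omega
  interval_cases m
  · omega
  · omega

lemma val_int_div_nat {p : ℕ} [hpf : Fact p.Prime] {a : ℤ} (ha : a ≠ 0) {n : ℕ} (hn : n ≠ 0) :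
    padicValRat p ((a : ℚ) / (n : ℚ)) = (padicValInt p a : ℤ) - (padicValNat p n : ℤ) := by
  rw [padicValRat.div (q := (a:ℚ)) (by exact_mod_cast ha) (by exact_mod_cast hn)]
  rw [padicValRat.of_int, padicValRat.of_nat]

lemma caseA {p n : ℕ} [hpf : Fact p.Prime] (hn : 2 ≤ n) (hple : p ≤ n)
    (hnp : padicValNat p n < Nat.log p n) {S : ℚ} (hS : S.den = Lf (n-1)) (a : ℤ) :
    padicValRat p (S + (a:ℚ)/(n:ℚ)) ≤ -(Nat.log p n : ℤ) := by
  have hp := hpf.out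
  set α := Nat.log p n with hα
  have hα1 : 1 ≤ α := log_ge_one hp.one_lt hple
  have hpow_ne : p ^ α ≠ n := by
    intro h
    rw [← h, padicValNat.prime_pow] at hnp
    omega
  have hpow_le : p ^ α ≤ n - 1 := by
    have h := Nat.pow_log_le_self p (show n ≠ 0 by omega)
    rw [← hα] at h
    omega
  have hlog' : Nat.log p (n-1) = α := by
    apply le_antisymm
    · exact Nat.log_mono_right (by omega)
    · exact (Nat.le_log_iff_pow_le hp.one_lt (by omega)).mpr hpow_le
  have hdenval : padicValNat p S.den = α := by
    have := Lf_fact hp (n := n - 1) (by omega)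
    rw [← Nat.factorization_def _ hp, hS, this, hlog']
  have hdvd : p ∣ S.den := by
    have h1 : 1 ≤ S.den.factorization p := by
      rw [Nat.factorization_def _ hp, hdenval]; omega
    have h2 := (Nat.Prime.pow_dvd_iff_le_factorization hp S.den_nz).mpr h1
    simpa using h2
  have hvS : padicValRat p S = -(α : ℤ) := by
    rw [padicValRat_of_dvd_den hp hdvd, hdenval]
  by_cases haz : (a:ℚ)/(n:ℚ) = 0
  · rw [haz, add_zero, hvS]
  · have ha : a ≠ 0 := by
      intro h; apply haz; simp [h]
    have hvA : -(α:ℤ) < padicValRat p ((a:ℚ)/(n:ℚ)) := by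
      rw [val_int_div_nat ha (by omega)]
      have h1 : (0:ℤ) ≤ padicValInt p a := Int.ofNat_nonneg _
      have h2 : (padicValNat p n : ℤ) < α := by exact_mod_cast hnp
      omega
    have hS0 : S ≠ 0 := by
      intro h
      rw [h] at hS
      simp only [Rat.den_zero] at hS
      have := hdvd
      rw [h] at this
      simp only [Rat.den_zero] at this
      exact hp.one_lt.ne' (Nat.eq_one_of_dvd_one this ▸ rfl)
    have hsum0 : S + (a:ℚ)/(n:ℚ) ≠ 0 := by
      intro h
      have : (a:ℚ)/(n:ℚ) = -S := by linarith
      rw [this, padicValRat.neg, hvS] at hvA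
      omega
    rw [padicValRat.add_eq_of_lt hsum0 hS0 haz (hvS ▸ hvA), hvS]

lemma caseB {p n : ℕ} [hpf : Fact p.Prime] (hn : 1 ≤ n) (hple : p ≤ n)
    (hprob : padicValNat p n = Nat.log p n) (S : ℚ) (a₁ a₂ : ℤ)
    (h12 : ¬ (p:ℤ) ∣ (a₁ - a₂)) :
    ∃ a : ℤ, (a = a₁ ∨ a = a₂) ∧ padicValRat p (S + (a:ℚ)/(n:ℚ)) ≤ -(Nat.log p n : ℤ) := by
  have hp := hpf.out
  set α := Nat.log p n with hα
  have hdne : a₁ - a₂ ≠ 0 := by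
    intro h; apply h12; rw [h]; exact dvd_zero _
  set d : ℚ := ((a₁ - a₂ : ℤ) : ℚ) / (n : ℚ) with hd
  have hd0 : d ≠ 0 := by
    rw [hd]
    apply div_ne_zero (by exact_mod_cast hdne) (by exact_mod_cast (by omega : n ≠ 0))
  have hvd : padicValRat p d = -(α : ℤ) := by
    rw [hd, val_int_div_nat hdne (by omega), padicValInt.eq_zero_of_not_dvd h12, hprob]
    simp
  set x := S + (a₁:ℚ)/(n:ℚ) with hx
  set y := S + (a₂:ℚ)/(n:ℚ) with hy
  have hxy : y = x - d := by
    rw [hx, hy, hd]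
    push_cast
    ring
  by_cases hcase : x ≠ 0 ∧ padicValRat p x ≤ -(α:ℤ)
  · exact ⟨a₁, Or.inl rfl, hcase.2⟩
  · refine ⟨a₂, Or.inr rfl, ?_⟩
    show padicValRat p y ≤ -(α:ℤ)
    by_cases hx0 : x = 0
    · rw [hxy, hx0, zero_sub, padicValRat.neg, hvd]
    · have hvx : -(α:ℤ) < padicValRat p x := by
        push_neg at hcase
        exact hcase hx0
      have hy_eq : y = -d + x := by rw [hxy]; ring
      have hsum0 : -d + x ≠ 0 := by
        intro h
        have : x = d := by linarith
        rw [this, hvd] at hvx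
        omega
      rw [hy_eq, padicValRat.add_eq_of_lt hsum0 (neg_ne_zero.mpr hd0) hx0
        (by rw [padicValRat.neg, hvd]; exact hvx), padicValRat.neg, hvd]

lemma padic_le_log {p n : ℕ} (hp : p.Prime) (hn : 1 ≤ n) : padicValNat p n ≤ Nat.log p n := by
  have h1 : p ^ padicValNat p n ∣ n := pow_padicValNat_dvd
  have h2 : p ^ padicValNat p n ≤ n := Nat.le_of_dvd (by omega) h1
  exact (Nat.le_log_iff_pow_le hp.one_lt (by omega)).mpr h2

lemma case2pow {n : ℕ} (hn : 2 ≤ n) (hpow : n = 2 ^ Nat.log 2 n) {S : ℚ}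
    (hS : S.den = Lf (n-1)) {a : ℤ} (ha : Odd a) :
    padicValRat 2 (S + (a:ℚ)/(n:ℚ)) ≤ -(Nat.log 2 n : ℤ) := by
  set α := Nat.log 2 n with hα
  have hα1 : 1 ≤ α := log_ge_one (by norm_num) hn
  have ha0 : a ≠ 0 := by
    intro h; rw [h] at ha; exact (Int.not_odd_iff_even.mpr Even.zero) ha
  have hnodd : ¬ (2:ℤ) ∣ a := by
    rw [Int.two_dvd_ne_zero]
    rcases ha with ⟨k, hk⟩
    omega
  have hvn : padicValNat 2 n = α := by
    conv_lhs => rw [hpow]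
    exact padicValNat.prime_pow α
  have hva : padicValRat 2 ((a:ℚ)/(n:ℚ)) = -(α : ℤ) := by
    rw [val_int_div_nat ha0 (by omega), padicValInt.eq_zero_of_not_dvd hnodd, hvn]
    simp
  by_cases hS0 : S = 0
  · rw [hS0, zero_add, hva]
  · have hlt : -(α:ℤ) < padicValRat 2 S := by
      have h1 := padicValRat_ge_neg_den 2 S
      have h2 : padicValNat 2 S.den = Nat.log 2 (n-1) := by
        rw [hS, ← Nat.factorization_def _ Nat.prime_two, Lf_fact Nat.prime_two (by omega)]
      have h3 : Nat.log 2 (n-1) < α := by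
        apply Nat.log_lt_of_lt_pow (by omega)
        rw [← hpow]
        omega
      rw [h2] at h1
      omega
    have hsum0 : (a:ℚ)/(n:ℚ) + S ≠ 0 := by
      intro h
      have : S = -((a:ℚ)/(n:ℚ)) := by linarith
      rw [this, padicValRat.neg, hva] at hlt
      omega
    have hAzero : (a:ℚ)/(n:ℚ) ≠ 0 := by
      apply div_ne_zero (by exact_mod_cast ha0) (by exact_mod_cast (by omega : n ≠ 0))
    rw [add_comm]
    rw [padicValRat.add_eq_of_lt hsum0 hAzero hS0 (by rw [hva]; exact hlt), hva]

lemma den_int_div_nat_dvd (a : ℤ) (n : ℕ) : ((a:ℚ)/(n:ℚ)).den ∣ n := by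
  have h : (a:ℚ)/(n:ℚ) = Rat.divInt a n := by rw [Rat.divInt_eq_div]; norm_num
  have := h ▸ Rat.den_dvd a (n : ℤ)
  exact_mod_cast this

lemma key_concl {n : ℕ} (hn : 2 ≤ n) {S : ℚ} (hS : S.den = Lf (n-1)) (a : ℤ)
    (H : ∀ p : ℕ, p.Prime → p ≤ n → padicValRat p (S + (a:ℚ)/(n:ℚ)) ≤ -(Nat.log p n : ℤ)) :
    (S + (a:ℚ)/(n:ℚ)).den = Lf n := by
  set q := S + (a:ℚ)/(n:ℚ) with hq
  have dvd1 : q.den ∣ Lf n := by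
    have hSd : (S.den : ℕ) ∣ Lf n := by
      rw [hS]; exact Lf_dvd_of_le (by omega)
    obtain ⟨z₁, hz₁⟩ := mul_int_of_den_dvd S _ hSd
    have hAd : ((a:ℚ)/(n:ℚ)).den ∣ Lf n :=
      dvd_trans (den_int_div_nat_dvd a n) (dvd_Lf (by omega) le_rfl)
    obtain ⟨z₂, hz₂⟩ := mul_int_of_den_dvd ((a:ℚ)/(n:ℚ)) _ hAd
    apply den_dvd_of_mul_int q (Lf n) (Lf_ne_zero n) (z₁ + z₂)
    rw [hq, add_mul, hz₁, hz₂]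
    push_cast
    ring
  have dvd2 : Lf n ∣ q.den := by
    rw [← Nat.factorization_le_iff_dvd (Lf_ne_zero n) q.den_nz]
    intro p
    by_cases pp : p.Prime
    · rw [Lf_fact pp (by omega)]
      by_cases hple : p ≤ n
      · haveI : Fact p.Prime := ⟨pp⟩
        exact den_fact_ge pp (H p pp hple)
      · rw [Nat.log_eq_zero_iff.mpr (Or.inl (by omega))]
        exact Nat.zero_le _
    · rw [Nat.factorization_eq_zero_of_not_prime _ pp]
      exact Nat.zero_le _
  exact Nat.dvd_antisymm dvd1 dvd2

lemma key (A : Set ℤ) (hodd : ∃ a ∈ A, Odd a)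
    (hA : ∀ p : ℕ, p.Prime → Odd p →
      ∃ a₁ ∈ A, ∃ a₂ ∈ A, ¬ a₁ ≡ a₂ [ZMOD (p : ℤ)])
    (n : ℕ) (hn : 1 ≤ n) (S : ℚ) (hS : S.den = Lf (n-1)) :
    ∃ a ∈ A, (S + (a:ℚ)/(n:ℚ)).den = Lf n := by
  obtain ⟨a₀, ha₀, hodd₀⟩ := hodd
  rcases eq_or_lt_of_le hn with h1 | h1
  · -- n = 1
    refine ⟨a₀, ha₀, ?_⟩
    have hn1 : n = 1 := h1.symm
    subst hn1
    have hL0 : Lf 0 = 1 := by simp [Lf]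
    have hL1 : Lf 1 = 1 := by simp [Lf]
    rw [hL0] at hS
    have hSint : (S.num : ℚ) = S := Rat.den_eq_one_iff S |>.mp hS
    rw [hL1]
    push_cast
    rw [div_one, ← hSint]
    exact_mod_cast Rat.den_intCast (S.num + a₀)
  · -- n ≥ 2
    have hn2 : 2 ≤ n := h1
    by_cases h2p : padicValNat 2 n = Nat.log 2 n
    · -- n is a power of 2
      refine ⟨a₀, ha₀, key_concl hn2 hS a₀ ?_⟩
      intro p pp hple
      by_cases hp2 : p = 2
      · subst hp2
        exact case2pow hn2 (two_prob hn2 h2p) hS hodd₀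
      · haveI : Fact p.Prime := ⟨pp⟩
        apply caseA hn2 hple _ hS a₀
        rcases lt_or_eq_of_le (padic_le_log (n := n) pp (by omega)) with h | h
        · exact h
        · exact absurd (unique_prob pp Nat.prime_two (by omega) hple hn2 h h2p) hp2
    · by_cases hex : ∃ p₀, p₀.Prime ∧ p₀ ≤ n ∧ padicValNat p₀ n = Nat.log p₀ n
      · obtain ⟨p₀, pp₀, hp₀n, hprob⟩ := hex
        have hp₀2 : p₀ ≠ 2 := fun h => h2p (h ▸ hprob)
        have hoddp : Odd p₀ := pp₀.odd_of_ne_two hp₀2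
        obtain ⟨a₁, ha₁, a₂, ha₂, h12⟩ := hA p₀ pp₀ hoddp
        have h12' : ¬ (p₀:ℤ) ∣ (a₁ - a₂) := by
          intro h
          apply h12
          rw [Int.modEq_iff_dvd]
          rw [show a₂ - a₁ = -(a₁ - a₂) by ring]
          exact dvd_neg.mpr h
        haveI : Fact p₀.Prime := ⟨pp₀⟩
        obtain ⟨a, hamem, hval⟩ := caseB (by omega) hp₀n hprob S a₁ a₂ h12'
        have haA : a ∈ A := by rcases hamem with h | h <;> subst h <;> assumption
        refine ⟨a, haA, key_concl hn2 hS a ?_⟩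
        intro p pp hple
        by_cases hpp : p = p₀
        · subst hpp; exact hval
        · haveI : Fact p.Prime := ⟨pp⟩
          apply caseA hn2 hple _ hS a
          rcases lt_or_eq_of_le (padic_le_log (n := n) pp (by omega)) with h | h
          · exact h
          · exact absurd (unique_prob pp pp₀ (by omega) hple hp₀n h hprob) hpp
      · push_neg at hex
        refine ⟨a₀, ha₀, key_concl hn2 hS a₀ ?_⟩
        intro p pp hple
        haveI : Fact p.Prime := ⟨pp⟩
        apply caseA hn2 hple _ hS a₀
        exact lt_of_le_of_ne (padic_le_log (n := n) pp (by omega)) (hex p pp hple)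

/-- If `A ⊆ ℤ` contains an odd integer and for every odd prime `p` contains two elements
that are incongruent mod `p`, then there is a sequence `(r_i)` with values in `A` such that
for every `n ≥ 1` the denominator of `Σ_{i=1}^n r_i/i` in lowest terms equals
`lcm(1, 2, …, n)`. -/
theorem exists_sequence_denominator_eq_lcm
    (A : Set ℤ) (hodd : ∃ a ∈ A, Odd a)
    (hA : ∀ p : ℕ, p.Prime → Odd p →
      ∃ a₁ ∈ A, ∃ a₂ ∈ A, ¬ a₁ ≡ a₂ [ZMOD (p : ℤ)]) :
    ∃ r : ℕ → ℤ, (∀ i, 1 ≤ i → r i ∈ A) ∧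
      ∀ n : ℕ, 1 ≤ n →
        (∑ i ∈ Finset.Icc 1 n, (r i : ℚ) / i).den = (Finset.Icc 1 n).lcm id := by
  classical
  have key' := key A hodd hA
  let g : ℕ → ℚ → ℤ := fun n S =>
    if h : 1 ≤ n ∧ S.den = Lf (n-1) then (key' n h.1 S h.2).choose else 0
  let T : ℕ → ℚ := fun n => Nat.rec 0 (fun m Tm => Tm + ((g (m+1) Tm : ℤ) : ℚ)/(((m+1 : ℕ)) : ℚ)) n
  have hTsucc : ∀ m, T (m+1) = T m + ((g (m+1) (T m) : ℤ) : ℚ)/(((m+1 : ℕ)) : ℚ) := fun m => rfl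
  have hTden : ∀ n, (T n).den = Lf n := by
    intro n
    induction n with
    | zero =>
      show (0 : ℚ).den = Lf 0
      simp [Lf]
    | succ m ih =>
      have hcond : 1 ≤ m + 1 ∧ (T m).den = Lf ((m+1)-1) := ⟨by omega, by simpa using ih⟩
      have hg : g (m+1) (T m) = (key' (m+1) hcond.1 (T m) hcond.2).choose := by
        show dite _ _ _ = _
        rw [dif_pos hcond]
      rw [hTsucc m, hg]
      exact (key' (m+1) hcond.1 (T m) hcond.2).choose_spec.2
  set r : ℕ → ℤ := fun i => g i (T (i-1)) with hr
  have hmem : ∀ i, 1 ≤ i → r i ∈ A := by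
    intro i hi
    obtain ⟨m, rfl⟩ : ∃ m, i = m + 1 := ⟨i - 1, by omega⟩
    have hcond : 1 ≤ m + 1 ∧ (T m).den = Lf ((m+1)-1) := ⟨by omega, by simpa using hTden m⟩
    have hg : r (m+1) = (key' (m+1) hcond.1 (T m) hcond.2).choose := by
      show dite _ _ _ = _
      simp only [Nat.add_sub_cancel] at hcond ⊢
      rw [dif_pos hcond]
    rw [hg]
    exact (key' (m+1) hcond.1 (T m) hcond.2).choose_spec.1
  have hsum : ∀ n, ∑ i ∈ Finset.Icc 1 n, (r i : ℚ) / i = T n := by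
    intro n
    induction n with
    | zero => simp [T]
    | succ m ih =>
      rw [Finset.sum_Icc_succ_top (by omega : 1 ≤ m + 1), ih, hTsucc m]
      congr 1
  refine ⟨r, hmem, ?_⟩
  intro n hn
  rw [hsum n, hTden n]
  rfl
end
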